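/- arXiv:2403.08927 — 4 statements merged into one kernel-verified Lean document; each statement's English description precedes it below -/
import Mathlib

section
/- Assume the unit-level causal setup with treatment ignorability and overlap. Then for each z ∈ {0,1} and every bounded measurable function b : 𝒳 → ℝ, E[ 1{Z=z}·(D − b(X))/P_z(X) + b(X) ] = P(D(z) = 1), where P_1(X) = π(X) and P_0(X) = 1 − π(X). In particular the identity holds for any (possibly misspecified) outcome model b, provided the propensity score π is correct. -/
open MeasureTheory ProbabilityTheory Set

noncomputable section

variable {Ω 𝒳 : Type*} [MeasurableSpace Ω] [MeasurableSpace 𝒳]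

/-- Observed intermediate variable `D = Z·D(1) + (1−Z)·D(0)`. -/
def Dobs (Z D0 D1 : Ω → ℝ) (ω : Ω) : ℝ := Z ω * D1 ω + (1 - Z ω) * D0 ω

/-- `w` is a `σ(X)`-measurable version of the conditional probability of the event `A`
given `σ(X)`, represented as a measurable function of `X`. -/
def IsCondProb (P : Measure Ω) (X : Ω → 𝒳) (A : Set Ω) (w : 𝒳 → ℝ) : Prop :=
  Measurable w ∧
    (fun ω => w (X ω)) =ᵐ[P]
      P[A.indicator (fun _ => (1 : ℝ)) | MeasurableSpace.comap X inferInstance]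

/-- Conditional independence of `U` and `V` given `σ(X)`: the product rule for conditional
expectations of indicators of events generated by `U` and by `V`. -/
def CondIndepGiven (P : Measure Ω) (X : Ω → 𝒳) {E F : Type*} [MeasurableSpace E]
    [MeasurableSpace F] (U : Ω → E) (V : Ω → F) : Prop :=
  ∀ (s : Set E) (t : Set F), MeasurableSet s → MeasurableSet t →
    P[(fun ω => s.indicator (fun _ => (1 : ℝ)) (U ω) * t.indicator (fun _ => (1 : ℝ)) (V ω)) |
        MeasurableSpace.comap X inferInstance]
      =ᵐ[P]
    fun ω =>
      (P[(fun ω' => s.indicator (fun _ => (1 : ℝ)) (U ω')) |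
          MeasurableSpace.comap X inferInstance]) ω *
      (P[(fun ω' => t.indicator (fun _ => (1 : ℝ)) (V ω')) |
          MeasurableSpace.comap X inferInstance]) ω


/-! With `χ = 1{Z = z}`, `Y = D(z)` and `p = P_z(X)`, correctness of the propensity score says
`E[χ | X] = p`, and ignorability says `E[χ Y | X] = p E[Y | X]`. Overlap makes `1 / p` and
`b(X) / p` bounded and `σ(X)`-measurable, so they can be pulled into the conditional expectations:
hence `E[χ Y / p] = E[Y]` and `E[χ b(X) / p] = E[b(X)]`, and the two `b`-terms cancel whatever
`b` is. On `{Z = z}` the observed `D` equals `D(z)`, and `E[D(z)] = P(D(z) = 1)`. -/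

section

variable {α : Type*} {m m0 : MeasurableSpace α} {μ : Measure α}

lemma integral_mul_condExp_of_bound [IsFiniteMeasure μ] (hm : m ≤ m0) {f g : α → ℝ} {c : ℝ}
    (hf : StronglyMeasurable[m] f) (hfc : ∀ᵐ ω ∂μ, ‖f ω‖ ≤ c) (hg : Integrable g μ) :
    ∫ ω, f ω * g ω ∂μ = ∫ ω, f ω * μ[g | m] ω ∂μ :=
  calc ∫ ω, f ω * g ω ∂μ = ∫ ω, μ[f * g | m] ω ∂μ := (integral_condExp hm).symm
    _ = ∫ ω, f ω * μ[g | m] ω ∂μ :=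
      integral_congr_ae (condExp_stronglyMeasurable_mul_of_bound hm hf hg c hfc)

theorem integral_ipw_correction_eq [IsFiniteMeasure μ] (hm : m ≤ m0) {χ Y p b : α → ℝ}
    {ε C : ℝ} (hε : 0 < ε) (hp : StronglyMeasurable[m] p) (hpε : ∀ᵐ ω ∂μ, ε ≤ p ω)
    (hb : StronglyMeasurable[m] b) (hbC : ∀ᵐ ω ∂μ, |b ω| ≤ C)
    (hχ : Integrable χ μ) (hχY : Integrable (fun ω => χ ω * Y ω) μ)
    (hχp : μ[χ | m] =ᵐ[μ] p) (hχYp : μ[fun ω => χ ω * Y ω | m] =ᵐ[μ] fun ω => p ω * μ[Y | m] ω) :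
    ∫ ω, (χ ω * (Y ω - b ω) / p ω + b ω) ∂μ = ∫ ω, Y ω ∂μ := by
  have hp_inv : StronglyMeasurable[m] fun ω => (p ω)⁻¹ := (hp.measurable.inv).stronglyMeasurable
  have hb_div : StronglyMeasurable[m] fun ω => b ω / p ω :=
    (hb.measurable.div hp.measurable).stronglyMeasurable
  have hp_inv_le : ∀ᵐ ω ∂μ, ‖(p ω)⁻¹‖ ≤ ε⁻¹ := by
    filter_upwards [hpε] with ω hω
    rw [norm_inv, Real.norm_of_nonneg (hε.le.trans hω)]
    exact inv_anti₀ hε hω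
  have hb_div_le : ∀ᵐ ω ∂μ, ‖b ω / p ω‖ ≤ C / ε := by
    filter_upwards [hpε, hbC] with ω hpω hbω
    rw [norm_div, Real.norm_of_nonneg (hε.le.trans hpω), Real.norm_eq_abs]
    exact div_le_div₀ ((abs_nonneg _).trans hbω) hbω hε hpω
  have hb_int : Integrable b μ :=
    .of_bound (hb.mono hm).aestronglyMeasurable C (by simpa only [Real.norm_eq_abs] using hbC)
  have h_weighted : ∫ ω, (p ω)⁻¹ * (χ ω * Y ω) ∂μ = ∫ ω, Y ω ∂μ := by
    rw [integral_mul_condExp_of_bound hm hp_inv hp_inv_le hχY, ← integral_condExp hm (f := Y)]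
    refine integral_congr_ae ?_
    filter_upwards [hχYp, hpε] with ω hω hpω
    rw [hω, inv_mul_cancel_left₀ (hε.trans_le hpω).ne']
  have h_model : ∫ ω, b ω / p ω * χ ω ∂μ = ∫ ω, b ω ∂μ := by
    rw [integral_mul_condExp_of_bound hm hb_div hb_div_le hχ]
    refine integral_congr_ae ?_
    filter_upwards [hχp, hpε] with ω hω hpω
    rw [hω, div_mul_cancel₀ _ (hε.trans_le hpω).ne']
  have h_weighted_int : Integrable (fun ω => (p ω)⁻¹ * (χ ω * Y ω)) μ :=
    hχY.bdd_mul (hp_inv.mono hm).aestronglyMeasurable hp_inv_le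
  have h_model_int : Integrable (fun ω => b ω / p ω * χ ω) μ :=
    hχ.bdd_mul (hb_div.mono hm).aestronglyMeasurable hb_div_le
  calc ∫ ω, (χ ω * (Y ω - b ω) / p ω + b ω) ∂μ
      = ∫ ω, ((p ω)⁻¹ * (χ ω * Y ω) - b ω / p ω * χ ω + b ω) ∂μ := by
        congr 1 with ω; ring
    _ = ∫ ω, Y ω ∂μ := by
      rw [integral_add (f := fun ω => (p ω)⁻¹ * (χ ω * Y ω) - b ω / p ω * χ ω)
          (h_weighted_int.sub h_model_int) hb_int,
        integral_sub h_weighted_int h_model_int, h_weighted, h_model, sub_add_cancel]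

lemma indicator_setOf_eq_one_apply {β : Type*} {f : β → ℝ} {x : β} (hx : f x = 0 ∨ f x = 1) :
    {y | f y = 1}.indicator (fun _ => (1 : ℝ)) x = f x := by
  rcases hx with h | h <;> simp [h]

lemma integrable_of_zero_or_one [IsFiniteMeasure μ] {f : α → ℝ} (hf : Measurable f)
    (h01 : ∀ ω, f ω = 0 ∨ f ω = 1) : Integrable f μ :=
  .of_bound hf.aestronglyMeasurable 1 (ae_of_all _ fun ω => by rcases h01 ω with h | h <;> simp [h])

lemma integral_eq_measureReal_of_zero_or_one {f : α → ℝ} (hf : Measurable f)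
    (h01 : ∀ ω, f ω = 0 ∨ f ω = 1) : ∫ ω, f ω ∂μ = μ.real {ω | f ω = 1} :=
  calc ∫ ω, f ω ∂μ = ∫ ω, {ω | f ω = 1}.indicator (fun _ => (1 : ℝ)) ω ∂μ :=
        integral_congr_ae (ae_of_all _ fun ω => (indicator_setOf_eq_one_apply (h01 ω)).symm)
    _ = μ.real {ω | f ω = 1} := integral_indicator_one (hf (measurableSet_singleton 1))

lemma Dobs_eq_of_eq {Z D0 D1 : α → ℝ} {ω : α} {z : ℝ} (hz : z = 0 ∨ z = 1) (hZω : Z ω = z) :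
    Dobs Z D0 D1 ω = if z = 1 then D1 ω else D0 ω := by
  rcases hz with rfl | rfl <;> simp [Dobs, hZω]

end

lemma IsCondProb.compl {P : Measure Ω} [IsFiniteMeasure P] {X : Ω → 𝒳} {A : Set Ω} {w : 𝒳 → ℝ}
    (hX : Measurable X) (hA : MeasurableSet A) (h : IsCondProb P X A w) :
    IsCondProb P X Aᶜ (fun x => 1 - w x) := by
  refine ⟨measurable_const.sub h.1, ?_⟩
  rw [Set.indicator_compl]
  refine ((condExp_sub (integrable_const 1) ((integrable_const 1).indicator hA) _).trans ?_).symm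
  rw [condExp_const hX.comap_le]
  filter_upwards [h.2] with ω hω
  simp [hω]

lemma IsCondProb.condExp_ite_eq {P : Measure Ω} [IsFiniteMeasure P] {X : Ω → 𝒳} {Z : Ω → ℝ}
    {πf : 𝒳 → ℝ} {z : ℝ} (hX : Measurable X) (hZ : Measurable Z) (hZ01 : ∀ ω, Z ω = 0 ∨ Z ω = 1)
    (hπ : IsCondProb P X {ω | Z ω = 1} πf) (hz : z = 0 ∨ z = 1) :
    P[fun ω => if Z ω = z then (1 : ℝ) else 0 | MeasurableSpace.comap X inferInstance]
      =ᵐ[P] fun ω => if z = 1 then πf (X ω) else 1 - πf (X ω) := by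
  have hA : MeasurableSet {ω | Z ω = 1} := hZ (measurableSet_singleton 1)
  rcases hz with rfl | rfl
  · have h_compl : (fun ω => if Z ω = 0 then (1 : ℝ) else 0)
        = {ω | Z ω = 1}ᶜ.indicator (fun _ => 1) := by
      ext ω; rcases hZ01 ω with h | h <;> simp [h]
    simpa [h_compl] using (hπ.compl hX hA).2.symm
  · have h_ind : (fun ω => if Z ω = 1 then (1 : ℝ) else 0)
        = {ω | Z ω = 1}.indicator (fun _ => 1) := by
      ext ω; simp [Set.indicator_apply]
    simpa [h_ind] using hπ.2.symm

lemma CondIndepGiven.condExp_mul_eq {P : Measure Ω} {X : Ω → 𝒳} {E F : Type*} [MeasurableSpace E]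
    [MeasurableSpace F] {U : Ω → E} {V : Ω → F} (h : CondIndepGiven P X U V) {f : E → ℝ}
    {g : F → ℝ} (hf : Measurable f) (hg : Measurable g) (hf01 : ∀ ω, f (U ω) = 0 ∨ f (U ω) = 1)
    (hg01 : ∀ ω, g (V ω) = 0 ∨ g (V ω) = 1) :
    P[fun ω => f (U ω) * g (V ω) | MeasurableSpace.comap X inferInstance]
      =ᵐ[P] fun ω => P[fun ω => f (U ω) | MeasurableSpace.comap X inferInstance] ω *
        P[fun ω => g (V ω) | MeasurableSpace.comap X inferInstance] ω := by
  simpa only [fun ω => indicator_setOf_eq_one_apply (hf01 ω),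
    fun ω => indicator_setOf_eq_one_apply (hg01 ω)] using
    h {y | f y = 1} {y | g y = 1} (hf (measurableSet_singleton 1)) (hg (measurableSet_singleton 1))

theorem dr_identity_correct_propensity_general
    (P : Measure Ω) [IsProbabilityMeasure P]
    (X : Ω → 𝒳) (Z D0 D1 : Ω → ℝ)
    (hX : Measurable X) (hZ : Measurable Z) (hD0 : Measurable D0) (hD1 : Measurable D1)
    (hZ01 : ∀ ω, Z ω = 0 ∨ Z ω = 1)
    (hD0_01 : ∀ ω, D0 ω = 0 ∨ D0 ω = 1) (hD1_01 : ∀ ω, D1 ω = 0 ∨ D1 ω = 1)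
    -- π is a σ(X)-measurable version of P(Z=1 | σ(X))
    (πf : 𝒳 → ℝ) (hπ : IsCondProb P X {ω | Z ω = 1} πf)
    -- treatment ignorability: Z ⫫ (D(0), D(1)) | σ(X)
    (hign : CondIndepGiven P X Z (fun ω => (D0 ω, D1 ω)))
    -- overlap
    (ε : ℝ) (hε : 0 < ε)
    (hover : ∀ᵐ ω ∂P, ε < πf (X ω) ∧ πf (X ω) < 1 - ε)
    (z : ℝ) (hz : z = 0 ∨ z = 1)
    (b : 𝒳 → ℝ) (hb : Measurable b) (hbbd : ∃ C, ∀ x, |b x| ≤ C) :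
    ∫ ω, ((if Z ω = z then (1 : ℝ) else 0) * (Dobs Z D0 D1 ω - b (X ω)) /
          (if z = 1 then πf (X ω) else 1 - πf (X ω)) + b (X ω)) ∂P
      = (P {ω | (if z = 1 then D1 ω else D0 ω) = 1}).toReal := by
  obtain ⟨C, hC⟩ := hbbd
  set treated : ℝ → ℝ := fun r => if r = z then 1 else 0
  set outcome : ℝ × ℝ → ℝ := fun d => if z = 1 then d.2 else d.1
  set propensity : 𝒳 → ℝ := fun x => if z = 1 then πf x else 1 - πf x
  have hXm : Measurable[MeasurableSpace.comap X inferInstance] X := comap_measurable X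
  have h_treated : Measurable treated :=
    measurable_const.ite (measurableSet_singleton z) measurable_const
  have h_outcome : Measurable outcome := by
    by_cases h : z = 1 <;> simp only [outcome, h, if_true, if_false] <;> fun_prop
  have h_propensity : Measurable propensity := by
    have hπf := hπ.1
    by_cases h : z = 1 <;> simp only [propensity, h, if_true, if_false] <;> fun_prop
  have h_treated01 : ∀ ω, treated (Z ω) = 0 ∨ treated (Z ω) = 1 := fun ω => by
    by_cases h : Z ω = z <;> simp [treated, h]
  have h_outcome01 : ∀ ω, outcome (D0 ω, D1 ω) = 0 ∨ outcome (D0 ω, D1 ω) = 1 := fun ω => by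
    by_cases h : z = 1 <;> simp [outcome, h, hD0_01, hD1_01]
  have h_overlap : ∀ᵐ ω ∂P, ε ≤ propensity (X ω) := by
    filter_upwards [hover] with ω hω
    by_cases h : z = 1 <;> simp only [propensity, h, if_true, if_false] <;> linarith [hω.1, hω.2]
  have h_product01 : ∀ ω, treated (Z ω) * outcome (D0 ω, D1 ω) = 0 ∨
      treated (Z ω) * outcome (D0 ω, D1 ω) = 1 := fun ω => by
    rcases h_treated01 ω with h | h <;> rcases h_outcome01 ω with h' | h' <;> simp [h, h']
  have h_outcome_m : Measurable fun ω => outcome (D0 ω, D1 ω) := h_outcome.comp (hD0.prodMk hD1)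
  have h_treated_condExp := hπ.condExp_ite_eq hX hZ hZ01 hz
  have h_ignorability := (hign.condExp_mul_eq h_treated h_outcome h_treated01 h_outcome01).trans
    (h_treated_condExp.mul .rfl)
  calc _ = ∫ ω, (treated (Z ω) * (outcome (D0 ω, D1 ω) - b (X ω)) / propensity (X ω)
          + b (X ω)) ∂P := by
        congr 1 with ω
        by_cases h : Z ω = z <;> simp [treated, outcome, propensity, h, Dobs_eq_of_eq hz]
    _ = ∫ ω, outcome (D0 ω, D1 ω) ∂P :=
        integral_ipw_correction_eq hX.comap_le hε (h_propensity.comp hXm).stronglyMeasurable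
          h_overlap (hb.comp hXm).stronglyMeasurable (ae_of_all _ fun ω => hC (X ω))
          (integrable_of_zero_or_one (h_treated.comp hZ) h_treated01)
          (integrable_of_zero_or_one ((h_treated.comp hZ).mul h_outcome_m) h_product01)
          h_treated_condExp h_ignorability
    _ = _ := integral_eq_measureReal_of_zero_or_one h_outcome_m h_outcome01

/-- **Doubly robust estimation of `P(D(z)=1)`: correct propensity score, arbitrary outcome
model `b`.** Under treatment ignorability and overlap, for `z ∈ {0,1}` and any bounded
measurable `b : 𝒳 → ℝ`,
`E[ 1{Z=z}·(D − b(X))/P_z(X) + b(X) ] = P(D(z) = 1)`,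
where `P_1(X) = π(X)` and `P_0(X) = 1 − π(X)`. -/
theorem dr_identity_correct_propensity [StandardBorelSpace 𝒳]
    (P : Measure Ω) [IsProbabilityMeasure P]
    (X : Ω → 𝒳) (Z D0 D1 : Ω → ℝ)
    (hX : Measurable X) (hZ : Measurable Z) (hD0 : Measurable D0) (hD1 : Measurable D1)
    (hZ01 : ∀ ω, Z ω = 0 ∨ Z ω = 1)
    (hD0_01 : ∀ ω, D0 ω = 0 ∨ D0 ω = 1) (hD1_01 : ∀ ω, D1 ω = 0 ∨ D1 ω = 1)
    -- π is a σ(X)-measurable version of P(Z=1 | σ(X))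
    (πf : 𝒳 → ℝ) (hπ : IsCondProb P X {ω | Z ω = 1} πf)
    -- treatment ignorability: Z ⫫ (D(0), D(1)) | σ(X)
    (hign : CondIndepGiven P X Z (fun ω => (D0 ω, D1 ω)))
    -- overlap
    (ε : ℝ) (hε : 0 < ε) (hε' : ε < 1 / 2)
    (hover : ∀ᵐ ω ∂P, ε < πf (X ω) ∧ πf (X ω) < 1 - ε)
    (z : ℝ) (hz : z = 0 ∨ z = 1)
    (b : 𝒳 → ℝ) (hb : Measurable b) (hbbd : ∃ C, ∀ x, |b x| ≤ C) :
    ∫ ω, ((if Z ω = z then (1 : ℝ) else 0) * (Dobs Z D0 D1 ω - b (X ω)) /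
          (if z = 1 then πf (X ω) else 1 - πf (X ω)) + b (X ω)) ∂P
      = (P {ω | (if z = 1 then D1 ω else D0 ω) = 1}).toReal :=
  dr_identity_correct_propensity_general P X Z D0 D1 hX hZ hD0 hD1 hZ01 hD0_01 hD1_01 πf hπ hign ε
    hε hover z hz b hb hbbd

end
end

section
/- Assume the unit-level causal setup with treatment ignorability. Then for each z ∈ {0,1} and every measurable function a : 𝒳 → (ε, 1−ε), E[ 1{Z=z}·(D − p_z(X))/a(X) + p_z(X) ] = P(D(z) = 1). In particular the identity holds for any (possibly misspecified) propensity model a, provided the principal score model p_z is correct. -/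
/-!
On `{Z = z}` the observed `D` equals `D(z)`, so with `I = 1{Z = z}` and `J = 1{D(z) = 1}` the
integrand is `a(X)⁻¹ · I · (J - p_z(X)) + p_z(X)`. Because `p_z(X) = E[J | X]` and ignorability
gives `E[I J | X] = E[I | X] E[J | X]`, the conditional expectation of `I · (J - p_z(X))` given
`X` vanishes. Pulling out the bounded `X`-measurable weight `a(X)⁻¹` shows that the first term
has mean zero for every `a`, and the second has mean `E[J] = P(D(z) = 1)`.
-/

open MeasureTheory ProbabilityTheory Set

noncomputable section

variable {Ω 𝒳 : Type*} [MeasurableSpace Ω] [MeasurableSpace 𝒳]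

section ConditionalExpectation

variable {α : Type*} {m m₀ : MeasurableSpace α} {μ : Measure α}

theorem condExp_mul_sub_condExp_ae_eq_zero {U V : α → ℝ} {C : ℝ}
    (hU : Integrable U μ) (hU_bdd : ∀ᵐ ω ∂μ, ‖U ω‖ ≤ C) (hV : Integrable V μ)
    (hUV : μ[U * V | m] =ᵐ[μ] μ[U | m] * μ[V | m]) :
    μ[U * (V - μ[V | m]) | m] =ᵐ[μ] 0 := by
  have hUV_int : Integrable (U * V) μ := hV.bdd_mul hU.aestronglyMeasurable hU_bdd
  have hEU_int : Integrable (μ[V | m] * U) μ :=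
    integrable_condExp.mul_bdd hU.aestronglyMeasurable hU_bdd
  have pull_out : μ[μ[V | m] * U | m] =ᵐ[μ] μ[V | m] * μ[U | m] :=
    condExp_mul_of_stronglyMeasurable_left stronglyMeasurable_condExp hEU_int hU
  rw [mul_sub, mul_comm U (μ[V | m])]
  filter_upwards [condExp_sub hUV_int hEU_int m, hUV, pull_out] with ω h_sub h_prod h_pull
  simp only [h_sub, Pi.sub_apply, h_prod, h_pull, Pi.mul_apply, Pi.zero_apply]
  ring

theorem integral_mul_eq_zero_of_condExp_ae_eq_zero [IsFiniteMeasure μ] (hm : m ≤ m₀)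
    {g h : α → ℝ} {C : ℝ} (hg : StronglyMeasurable[m] g) (hg_bdd : ∀ ω, ‖g ω‖ ≤ C)
    (hh : Integrable h μ) (hh0 : μ[h | m] =ᵐ[μ] 0) :
    ∫ ω, g ω * h ω ∂μ = 0 := by
  have hgh : Integrable (g * h) μ :=
    hh.bdd_mul (hg.mono hm).aestronglyMeasurable (ae_of_all _ hg_bdd)
  calc ∫ ω, g ω * h ω ∂μ = ∫ ω, μ[g * h | m] ω ∂μ := (integral_condExp hm).symm
    _ = ∫ ω, (g * μ[h | m]) ω ∂μ :=
      integral_congr_ae (condExp_mul_of_stronglyMeasurable_left hg hgh hh)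
    _ = 0 := by
      rw [integral_congr_ae (hh0.mul_left (f₃ := g))]
      simp

theorem integral_weighted_augmented_eq_measureReal [IsFiniteMeasure μ] (hm : m ≤ m₀)
    {S A : Set α} (hS : MeasurableSet S) (hA : MeasurableSet A)
    (hSA : μ[(S.indicator 1 * A.indicator 1 : α → ℝ) | m] =ᵐ[μ]
      μ[S.indicator 1 | m] * μ[A.indicator 1 | m])
    {g q : α → ℝ} {C : ℝ} (hg : StronglyMeasurable[m] g) (hg_bdd : ∀ ω, ‖g ω‖ ≤ C)
    (hq : q =ᵐ[μ] μ[A.indicator 1 | m]) :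
    ∫ ω, g ω * (S.indicator 1 ω * (A.indicator 1 ω - q ω)) + q ω ∂μ = μ.real A := by
  have hIS : Integrable (S.indicator (1 : α → ℝ)) μ := (integrable_const 1).indicator hS
  have hIA : Integrable (A.indicator (1 : α → ℝ)) μ := (integrable_const 1).indicator hA
  have hIS_bdd : ∀ᵐ ω ∂μ, ‖S.indicator (1 : α → ℝ) ω‖ ≤ 1 :=
    ae_of_all _ fun ω => (norm_indicator_le_norm_self _ _).trans norm_one.le
  set h : α → ℝ := S.indicator 1 * (A.indicator 1 - μ[A.indicator 1 | m])
  have hh : Integrable h μ :=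
    (hIA.sub integrable_condExp).bdd_mul hIS.aestronglyMeasurable hIS_bdd
  have hgh : Integrable (fun ω => g ω * h ω) μ :=
    hh.bdd_mul (hg.mono hm).aestronglyMeasurable (ae_of_all _ hg_bdd)
  calc ∫ ω, g ω * (S.indicator 1 ω * (A.indicator 1 ω - q ω)) + q ω ∂μ
      = ∫ ω, g ω * h ω + μ[A.indicator 1 | m] ω ∂μ := by
        refine integral_congr_ae ?_
        filter_upwards [hq] with ω hω
        simp only [h, hω, Pi.mul_apply, Pi.sub_apply]
    _ = ∫ ω, g ω * h ω ∂μ + ∫ ω, μ[A.indicator 1 | m] ω ∂μ :=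
      integral_add hgh integrable_condExp
    _ = μ.real A := by
      rw [integral_mul_eq_zero_of_condExp_ae_eq_zero hm hg hg_bdd hh
        (condExp_mul_sub_condExp_ae_eq_zero hIS hIS_bdd hIA hSA), integral_condExp hm,
        integral_indicator_one hA, zero_add]

end ConditionalExpectation

theorem Dobs_of_eq {β : Type*} {Z D0 D1 : β → ℝ} {z : ℝ} (hz : z = 0 ∨ z = 1) {ω : β}
    (h : Z ω = z) :
    Dobs Z D0 D1 ω = if z = 1 then D1 ω else D0 ω := by
  rcases hz with rfl | rfl <;> simp [Dobs, h]

theorem indicator_setOf_eq_one_of_zero_or_one {β : Type*} {f : β → ℝ} {x : β}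
    (hx : f x = 0 ∨ f x = 1) : {y | f y = 1}.indicator 1 x = f x := by
  rcases hx with h | h <;> simp [h]

theorem CondIndepGiven.condExp_indicator_preimage_mul {P : Measure Ω} {X : Ω → 𝒳}
    {E F : Type*} [MeasurableSpace E] [MeasurableSpace F] {U : Ω → E} {V : Ω → F}
    (h : CondIndepGiven P X U V) {s : Set E} {t : Set F} (hs : MeasurableSet s)
    (ht : MeasurableSet t) :
    P[((U ⁻¹' s).indicator 1 * (V ⁻¹' t).indicator 1 : Ω → ℝ) |
        MeasurableSpace.comap X inferInstance] =ᵐ[P]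
      P[(U ⁻¹' s).indicator 1 | MeasurableSpace.comap X inferInstance] *
        P[(V ⁻¹' t).indicator 1 | MeasurableSpace.comap X inferInstance] :=
  h s t hs ht

theorem dr_identity_correct_principal_score_general
    (P : Measure Ω) [IsProbabilityMeasure P]
    (X : Ω → 𝒳) (Z D0 D1 : Ω → ℝ)
    (hX : Measurable X) (hZ : Measurable Z) (hD0 : Measurable D0) (hD1 : Measurable D1)
    (hD0_01 : ∀ ω, D0 ω = 0 ∨ D0 ω = 1) (hD1_01 : ∀ ω, D1 ω = 0 ∨ D1 ω = 1)
    -- p_z is a σ(X)-measurable version of P(D(z)=1 | σ(X)), for z ∈ {0,1}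
    (p0f p1f : 𝒳 → ℝ)
    (hp0 : IsCondProb P X {ω | D0 ω = 1} p0f) (hp1 : IsCondProb P X {ω | D1 ω = 1} p1f)
    -- treatment ignorability: Z ⫫ (D(0), D(1)) | σ(X)
    (hign : CondIndepGiven P X Z (fun ω => (D0 ω, D1 ω)))
    -- a fixed constant ε ∈ (0, 1/2)
    (ε : ℝ) (hε : 0 < ε)
    (z : ℝ) (hz : z = 0 ∨ z = 1)
    -- an arbitrary measurable (possibly misspecified) propensity model with values in (ε, 1−ε)
    (a : 𝒳 → ℝ) (ha : Measurable a) (ha' : ∀ x, ε < a x ∧ a x < 1 - ε) :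
    ∫ ω, ((if Z ω = z then (1 : ℝ) else 0) *
          (Dobs Z D0 D1 ω - (if z = 1 then p1f (X ω) else p0f (X ω))) / a (X ω) +
          (if z = 1 then p1f (X ω) else p0f (X ω))) ∂P
      = (P {ω | (if z = 1 then D1 ω else D0 ω) = 1}).toReal := by
  set Dz : Ω → ℝ := fun ω => if z = 1 then D1 ω else D0 ω
  set pz : 𝒳 → ℝ := fun x => if z = 1 then p1f x else p0f x
  have hDz : Measurable Dz := by by_cases hz1 : z = 1 <;> simpa [Dz, hz1]
  have hpz : IsCondProb P X {ω | Dz ω = 1} pz := by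
    by_cases hz1 : z = 1 <;> simpa [Dz, pz, hz1]
  have hDz_indicator (ω : Ω) : {ω | Dz ω = 1}.indicator 1 ω = Dz ω :=
    indicator_setOf_eq_one_of_zero_or_one <| by
      by_cases hz1 : z = 1 <;> simp [Dz, hz1, hD0_01, hD1_01]
  have hind := hign.condExp_indicator_preimage_mul (measurableSet_singleton z)
    (t := {d | (if z = 1 then d.2 else d.1) = 1})
    (measurableSet_eq_fun (by by_cases hz1 : z = 1 <;> simp [hz1] <;> fun_prop) measurable_const)
  have hweight :
      StronglyMeasurable[MeasurableSpace.comap X inferInstance] fun ω => (a (X ω))⁻¹ :=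
    (ha.comp (comap_measurable X)).inv.stronglyMeasurable
  have hweight_bdd : ∀ ω, ‖(a (X ω))⁻¹‖ ≤ ε⁻¹ := fun ω => by
    rw [norm_inv, Real.norm_of_nonneg (hε.trans (ha' _).1).le]
    exact inv_anti₀ hε (ha' _).1.le
  calc _ = ∫ ω, (a (X ω))⁻¹ * ({ω | Z ω = z}.indicator 1 ω *
          ({ω | Dz ω = 1}.indicator 1 ω - pz (X ω))) + pz (X ω) ∂P := by
        refine integral_congr_ae (ae_of_all _ fun ω => ?_)
        by_cases h : Z ω = z
        · simp [h, hDz_indicator, Dobs_of_eq hz h, Dz, pz, div_eq_inv_mul]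
        · simp [h, pz]
    _ = _ := integral_weighted_augmented_eq_measureReal hX.comap_le
        (hZ (measurableSet_singleton z)) (hDz (measurableSet_singleton 1)) hind hweight
        hweight_bdd hpz.2

/-- **Doubly robust estimation of `P(D(z)=1)`: correct principal score, arbitrary propensity
model `a`.** Under treatment ignorability, for `z ∈ {0,1}` and any measurable
`a : 𝒳 → (ε, 1−ε)`,
`E[ 1{Z=z}·(D − p_z(X))/a(X) + p_z(X) ] = P(D(z) = 1)`. -/
theorem dr_identity_correct_principal_score [StandardBorelSpace 𝒳]
    (P : Measure Ω) [IsProbabilityMeasure P]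
    (X : Ω → 𝒳) (Z D0 D1 : Ω → ℝ)
    (hX : Measurable X) (hZ : Measurable Z) (hD0 : Measurable D0) (hD1 : Measurable D1)
    (hZ01 : ∀ ω, Z ω = 0 ∨ Z ω = 1)
    (hD0_01 : ∀ ω, D0 ω = 0 ∨ D0 ω = 1) (hD1_01 : ∀ ω, D1 ω = 0 ∨ D1 ω = 1)
    -- p_z is a σ(X)-measurable version of P(D(z)=1 | σ(X)), for z ∈ {0,1}
    (p0f p1f : 𝒳 → ℝ)
    (hp0 : IsCondProb P X {ω | D0 ω = 1} p0f) (hp1 : IsCondProb P X {ω | D1 ω = 1} p1f)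
    -- treatment ignorability: Z ⫫ (D(0), D(1)) | σ(X)
    (hign : CondIndepGiven P X Z (fun ω => (D0 ω, D1 ω)))
    -- a fixed constant ε ∈ (0, 1/2)
    (ε : ℝ) (hε : 0 < ε) (hε' : ε < 1 / 2)
    (z : ℝ) (hz : z = 0 ∨ z = 1)
    -- an arbitrary measurable (possibly misspecified) propensity model with values in (ε, 1−ε)
    (a : 𝒳 → ℝ) (ha : Measurable a) (ha' : ∀ x, ε < a x ∧ a x < 1 - ε) :
    ∫ ω, ((if Z ω = z then (1 : ℝ) else 0) *
          (Dobs Z D0 D1 ω - (if z = 1 then p1f (X ω) else p0f (X ω))) / a (X ω) +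
          (if z = 1 then p1f (X ω) else p0f (X ω))) ∂P
      = (P {ω | (if z = 1 then D1 ω else D0 ω) = 1}).toReal :=
  dr_identity_correct_principal_score_general P X Z D0 D1 hX hZ hD0 hD1 hD0_01 hD1_01 p0f p1f hp0
    hp1 hign ε hε z hz a ha ha'

end
end

section
/- Assume the pairwise causal setup with treatment ignorability, monotonicity, overlap, and pairwise principal ignorability for stratum 10. Then the propensity-score-and-principal-score weighting identification formula holds: E[ (Z₁·D₁·e_10(X₁)/(π(X₁)·p_1(X₁))) · ((1−Z₂)(1−D₂)·e_10(X₂)/((1−π(X₂))(1−p_0(X₂)))) · h(Y₁, Y₂) ] = τ_{h,N}^{10}, where τ_{h,N}^{10} = E[h(Y₁(1), Y₂(0))·1{S₁=10}·1{S₂=10}]. -/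
open MeasureTheory ProbabilityTheory Set

noncomputable section

variable {Ω 𝒳 : Type*} [MeasurableSpace Ω] [MeasurableSpace 𝒳]

/-- Observed outcome `Y = Z·Y(1) + (1−Z)·Y(0)`. -/
def Yobs (Z Y0 Y1 : Ω → ℝ) (ω : Ω) : ℝ := Z ω * Y1 ω + (1 - Z ω) * Y0 ω

/-- Indicator of the principal stratum `S = (D(1), D(0)) = s`. -/
def strat (D0 D1 : Ω → ℝ) (s : ℝ × ℝ) (ω : Ω) : ℝ := if (D1 ω, D0 ω) = s then 1 else 0

/-- Weight `w⁺(O) = Z·D·e_10(X)/(π(X)·p_1(X))`, with `e_10 = p_1 − p_0`. -/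
def wplus (πf p0f p1f : 𝒳 → ℝ) (X : Ω → 𝒳) (Z D : Ω → ℝ) (ω : Ω) : ℝ :=
  Z ω * D ω * (p1f (X ω) - p0f (X ω)) / (πf (X ω) * p1f (X ω))

/-- Weight `w⁻(O) = (1−Z)(1−D)·e_10(X)/((1−π(X))(1−p_0(X)))`. -/
def wminus (πf p0f p1f : 𝒳 → ℝ) (X : Ω → 𝒳) (Z D : Ω → ℝ) (ω : Ω) : ℝ :=
  (1 - Z ω) * (1 - D ω) * (p1f (X ω) - p0f (X ω)) /
    ((1 - πf (X ω)) * (1 - p0f (X ω)))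

/-- `ψ_{D₁}(O) = Z(D − p_1(X))/π(X) + p_1(X)`. -/
def psiD1 (πf p1f : 𝒳 → ℝ) (X : Ω → 𝒳) (Z D : Ω → ℝ) (ω : Ω) : ℝ :=
  Z ω * (D ω - p1f (X ω)) / πf (X ω) + p1f (X ω)

/-- `ψ_{D₀}(O) = (1−Z)(D − p_0(X))/(1−π(X)) + p_0(X)`. -/
def psiD0 (πf p0f : 𝒳 → ℝ) (X : Ω → 𝒳) (Z D : Ω → ℝ) (ω : Ω) : ℝ :=
  (1 - Z ω) * (D ω - p0f (X ω)) / (1 - πf (X ω)) + p0f (X ω)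

/-- `ψ_Δ(O) = ψ_{D₁}(O) − ψ_{D₀}(O)`. -/
def psiDelta (πf p0f p1f : 𝒳 → ℝ) (X : Ω → 𝒳) (Z D : Ω → ℝ) (ω : Ω) : ℝ :=
  psiD1 πf p1f X Z D ω - psiD0 πf p0f X Z D ω

/-- Pairwise outcome mean `μ_1100(x₁, x₂) = ∫∫ h(u,v) F_{11}(du|x₁) F_{00}(dv|x₂)`. -/
def mu1100 (F : Kernel (ℝ × ℝ × 𝒳) ℝ) (h : ℝ → ℝ → ℝ) (x₁ x₂ : 𝒳) : ℝ :=
  ∫ u, ∫ v, h u v ∂(F (0, 0, x₂)) ∂(F (1, 1, x₁))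

/-- `F` is a regular conditional distribution of `Y` given `W = (Z, D, X)`: a Markov kernel
whose evaluations along `W` form versions of the conditional probabilities
`P(Y ∈ A | σ(Z, D, X))`. -/
def IsRegCondDistrib (P : Measure Ω) (Y : Ω → ℝ) (W : Ω → ℝ × ℝ × 𝒳)
    (F : Kernel (ℝ × ℝ × 𝒳) ℝ) : Prop :=
  IsMarkovKernel F ∧
    ∀ A : Set ℝ, MeasurableSet A →
      (fun ω => (F (W ω) A).toReal) =ᵐ[P]
        P[(fun ω => A.indicator (fun _ => (1 : ℝ)) (Y ω)) |
          MeasurableSpace.comap W inferInstance]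

/-- **Pairwise principal ignorability for stratum 10**: there is a `σ(X₁,X₂)`-measurable
function `μ̄` such that for every latent strata pair
`(s₁,s₂) ∈ {(10,10),(10,00),(11,10),(11,00)}`, almost surely
`E[h(Y₁(1), Y₂(0))·1{S₁=s₁}·1{S₂=s₂} | σ(X₁,X₂)] = μ̄(X₁,X₂)·P(S₁=s₁, S₂=s₂ | σ(X₁,X₂))`
on the product space carrying the two independent copies. -/
def PPI10 (P : Measure Ω) (X : Ω → 𝒳) (D0 D1 Y0 Y1 : Ω → ℝ) (h : ℝ → ℝ → ℝ)
    (μbar : 𝒳 × 𝒳 → ℝ) : Prop :=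
  Measurable μbar ∧
    ∀ s₁ s₂ : ℝ × ℝ, (s₁ = (1, 0) ∨ s₁ = (1, 1)) → (s₂ = (1, 0) ∨ s₂ = (0, 0)) →
      (P.prod P)[(fun p => h (Y1 p.1) (Y0 p.2) * strat D0 D1 s₁ p.1 * strat D0 D1 s₂ p.2) |
          MeasurableSpace.comap (fun p : Ω × Ω => (X p.1, X p.2)) inferInstance]
        =ᵐ[P.prod P]
      fun p => μbar (X p.1, X p.2) *
        ((P.prod P)[(fun q => strat D0 D1 s₁ q.1 * strat D0 D1 s₂ q.2) |
          MeasurableSpace.comap (fun p : Ω × Ω => (X p.1, X p.2)) inferInstance]) p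

/-- `τ_{h,N}^{10} = E[h(Y₁(1), Y₂(0))·1{S₁=10}·1{S₂=10}]`, the unnormalized principal
generalized causal effect for stratum 10, on the product space carrying the two
independent copies. -/
def tauN10 (P : Measure Ω) (D0 D1 Y0 Y1 : Ω → ℝ) (h : ℝ → ℝ → ℝ) : ℝ :=
  ∫ p, h (Y1 p.1) (Y0 p.2) * strat D0 D1 (1, 0) p.1 * strat D0 D1 (1, 0) p.2 ∂(P.prod P)

/-!
On `{Z₁ = 1, Z₂ = 0}` the observed data of the two units are their potential data under
treatment and under control, so the weighted integrand is `Z₁ (1 - Z₂) G(T₁, T₂)` with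
`T = ((D(0), D(1), Y(0), Y(1)), X)`. Ignorability makes `π(X)` a version of `E[Z | T]` (the
measures `A ↦ E[Z; T ∈ A]` and `A ↦ E[π(X); T ∈ A]` agree on rectangles), so Fubini replaces
`Z₁ (1 - Z₂)` by `π(X₁) (1 - π(X₂))`, which cancels the propensity scores. The product
`D₁(1) (1 - D₂(0))` is the sum of the indicators of the strata pairs in `{10, 11} × {10, 00}`;
on each of them pairwise principal ignorability replaces `h(Y₁(1), Y₂(0))` by `μ̄(X₁, X₂)`, and
Fubini once more replaces `D₁(1)` and `1 - D₂(0)` by `p₁(X₁)` and `1 - p₀(X₂)`. What is left is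
`E[e₁₀(X₁) e₁₀(X₂) μ̄(X₁, X₂)]`, and the same steps, with `1{S = 10} = D(1) - D(0)` by
monotonicity, show that `τ` equals it too. Beforehand `π`, `p₀`, `p₁` and `μ̄` are replaced by
versions that are bounded everywhere, which changes none of the integrals.
-/

theorem Measurable.comp₂ {α β γ δ : Type*} [MeasurableSpace α] [MeasurableSpace β]
    [MeasurableSpace γ] [MeasurableSpace δ] {h : β → γ → δ}
    (hh : Measurable fun p : β × γ => h p.1 p.2) {f : α → β} {g : α → γ} (hf : Measurable f)
    (hg : Measurable g) : Measurable fun x => h (f x) (g x) :=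
  hh.comp (hf.prodMk hg)

theorem norm_sub_le_one_of_mem_Icc {a b : ℝ} (ha : a ∈ Icc (0 : ℝ) 1) (hb : b ∈ Icc (0 : ℝ) 1) :
    ‖a - b‖ ≤ 1 :=
  abs_sub_le_of_nonneg_of_le ha.1 ha.2 hb.1 hb.2

theorem norm_le_one_of_mem_Icc {a : ℝ} (ha : a ∈ Icc (0 : ℝ) 1) : ‖a‖ ≤ 1 := by
  simpa using norm_sub_le_one_of_mem_Icc ha (left_mem_Icc.mpr zero_le_one)

theorem norm_one_sub_le_one_of_mem_Icc {a : ℝ} (ha : a ∈ Icc (0 : ℝ) 1) : ‖1 - a‖ ≤ 1 :=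
  norm_sub_le_one_of_mem_Icc (right_mem_Icc.mpr zero_le_one) ha

theorem mem_Icc_of_eq_zero_or_eq_one {a : ℝ} (ha : a = 0 ∨ a = 1) : a ∈ Icc (0 : ℝ) 1 := by
  rcases ha with rfl | rfl <;> simp

theorem norm_div_le_div_of_le {a b A B : ℝ} (ha : ‖a‖ ≤ A) (hB : 0 < B) (hb : B ≤ b) :
    ‖a / b‖ ≤ A / B := by
  rw [norm_div, Real.norm_of_nonneg (hB.le.trans hb)]
  exact div_le_div₀ ((norm_nonneg a).trans ha) ha hB hb

section CondExp

variable {α : Type*} {m m₀ : MeasurableSpace α} {μ : Measure α}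

theorem integral_mul_condExp [IsFiniteMeasure μ] (hm : m ≤ m₀) {f g : α → ℝ}
    (hf : Integrable f μ) (hg : StronglyMeasurable[m] g) {C : ℝ} (hgC : ∀ x, ‖g x‖ ≤ C) :
    ∫ x, g x * f x ∂μ = ∫ x, g x * μ[f | m] x ∂μ := by
  have hgf : Integrable (g * f) μ :=
    hf.bdd_mul (hg.mono hm).aestronglyMeasurable (ae_of_all _ hgC)
  calc ∫ x, g x * f x ∂μ = ∫ x, μ[g * f | m] x ∂μ := (integral_condExp hm).symm
    _ = ∫ x, g x * μ[f | m] x ∂μ :=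
      integral_congr_ae (condExp_mul_of_stronglyMeasurable_left hg hgf hf)

theorem integral_mul_eq_of_condExp_eq_mul [IsFiniteMeasure μ] (hm : m ≤ m₀) {f q a M : α → ℝ}
    (hf : Integrable f μ) (hq : Integrable q μ)
    (ha : StronglyMeasurable[m] a) {Ca : ℝ} (haC : ∀ x, ‖a x‖ ≤ Ca)
    (hM : StronglyMeasurable[m] M) {CM : ℝ} (hMC : ∀ x, ‖M x‖ ≤ CM)
    (hfq : μ[f | m] =ᵐ[μ] a * μ[q | m]) :
    ∫ x, M x * f x ∂μ = ∫ x, M x * a x * q x ∂μ := by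
  calc ∫ x, M x * f x ∂μ = ∫ x, M x * μ[f | m] x ∂μ := integral_mul_condExp hm hf hM hMC
    _ = ∫ x, (M * a) x * μ[q | m] x ∂μ := integral_congr_ae <| hfq.mono fun x hx => by
        simp only [hx, Pi.mul_apply]
        ring
    _ = ∫ x, M x * a x * q x ∂μ :=
      (integral_mul_condExp hm hq (hM.mul ha) fun x => norm_mul_le_of_le (hMC x) (haC x)).symm

theorem condExp_const_sub [IsFiniteMeasure μ] (hm : m ≤ m₀) (c : ℝ) {f : α → ℝ}
    (hf : Integrable f μ) : μ[fun x => c - f x | m] =ᵐ[μ] fun x => c - μ[f | m] x := by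
  filter_upwards [condExp_sub (integrable_const c) hf m] with x hx
  rw [show (fun x => c - f x) = (fun _ => c) - f from rfl, hx, Pi.sub_apply, condExp_const hm]

theorem condExp_finsetSum_eq_mul {ι : Type*} {s : Finset ι} {f q : ι → α → ℝ}
    (hf : ∀ i ∈ s, Integrable (f i) μ) (hq : ∀ i ∈ s, Integrable (q i) μ) {a : α → ℝ}
    (h : ∀ i ∈ s, μ[f i | m] =ᵐ[μ] a * μ[q i | m]) :
    μ[∑ i ∈ s, f i | m] =ᵐ[μ] a * μ[∑ i ∈ s, q i | m] := by
  filter_upwards [condExp_finsetSum hf m, condExp_finsetSum hq m,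
    (Filter.eventually_all_finset s).mpr h] with x hfx hqx hx
  simp only [hfx, hqx, Finset.sum_apply, Pi.mul_apply, Finset.mul_sum]
  exact Finset.sum_congr rfl hx

theorem condExp_eq_clamp_mul {f q a : α → ℝ} (hf : AEStronglyMeasurable f μ)
    (hq : Integrable q μ) (hq₀ : 0 ≤ q) {C : ℝ} (hfq : ∀ x, |f x| ≤ C * q x)
    (h : μ[f | m] =ᵐ[μ] a * μ[q | m]) :
    μ[f | m] =ᵐ[μ] (fun x => max (-C) (min C (a x))) * μ[q | m] := by
  replace hf : Integrable f μ := (hq.const_mul C).mono' hf (ae_of_all _ hfq)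
  have hle : μ[(|f|) | m] ≤ᵐ[μ] μ[C • q | m] :=
    condExp_mono hf.abs (hq.smul C) (ae_of_all _ hfq)
  filter_upwards [h, abs_condExp_ae_le_condExp_abs f, hle, condExp_smul C q m,
    condExp_nonneg (m := m) (ae_of_all μ hq₀)] with x hx habs hmono hsmul hqx
  simp only [Pi.mul_apply, Pi.smul_apply, smul_eq_mul, Pi.zero_apply] at hx hsmul hqx ⊢
  rcases hqx.eq_or_lt with hzero | hpos
  · simp [hx, ← hzero]
  have haC : |a x| ≤ C := by
    refine le_of_mul_le_mul_right ?_ hpos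
    calc |a x| * μ[q | m] x = |μ[f | m] x| := by rw [hx, abs_mul, abs_of_pos hpos]
      _ ≤ C * μ[q | m] x := habs.trans (hmono.trans_eq hsmul)
  rw [hx, min_eq_right (abs_le.mp haC).2, max_eq_right (abs_le.mp haC).1]

end CondExp

section Fubini

variable {α β γ : Type*} [MeasurableSpace α] [MeasurableSpace β] [MeasurableSpace γ]

theorem integral_prod_mul_snd_eq_of_condExp {μ : Measure β} {ν : Measure α} [IsFiniteMeasure μ]
    [IsFiniteMeasure ν] {T : α → γ} (hT : Measurable T) {φ : α → ℝ} (hφ : Measurable φ)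
    {Cφ : ℝ} (hφC : ∀ x, ‖φ x‖ ≤ Cφ) {u : γ → ℝ} (hu : Measurable u) {Cu : ℝ}
    (huC : ∀ x, ‖u (T x)‖ ≤ Cu) (hφu : (fun x => u (T x)) =ᵐ[ν] ν[φ | .comap T inferInstance])
    {F : β × γ → ℝ} (hF : Measurable F) {CF : ℝ} (hFC : ∀ b x, ‖F (b, T x)‖ ≤ CF) :
    ∫ p, F (p.1, T p.2) * φ p.2 ∂(μ.prod ν) = ∫ p, F (p.1, T p.2) * u (T p.2) ∂(μ.prod ν) := by
  rw [integral_prod _ (Integrable.of_bound (by fun_prop) _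
      (ae_of_all _ fun p => norm_mul_le_of_le (hFC p.1 p.2) (hφC p.2))),
    integral_prod _ (Integrable.of_bound (by fun_prop) _
      (ae_of_all _ fun p => norm_mul_le_of_le (hFC p.1 p.2) (huC p.2)))]
  refine integral_congr_ae (ae_of_all _ fun b => ?_)
  dsimp only
  have hg : StronglyMeasurable[.comap T inferInstance] fun x => F (b, T x) :=
    (hF.comp measurable_prodMk_left |>.comp (comap_measurable T)).stronglyMeasurable
  rw [integral_mul_condExp hT.comap_le (Integrable.of_bound hφ.aestronglyMeasurable _
    (ae_of_all _ hφC)) hg (hFC b)]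
  exact integral_congr_ae (hφu.mono fun x hx => by simp only [← hx])

theorem integral_prod_mul_mul_eq_of_condExp {μ : Measure α} [IsFiniteMeasure μ] {T : α → γ}
    (hT : Measurable T) {φ₁ φ₂ : α → ℝ} (hφ₁ : Measurable φ₁) (hφ₂ : Measurable φ₂)
    {u₁ u₂ : γ → ℝ} (hu₁ : Measurable u₁) (hu₂ : Measurable u₂) {C : ℝ}
    (hφ₁C : ∀ x, ‖φ₁ x‖ ≤ C) (hφ₂C : ∀ x, ‖φ₂ x‖ ≤ C)
    (hu₁C : ∀ x, ‖u₁ (T x)‖ ≤ C) (hu₂C : ∀ x, ‖u₂ (T x)‖ ≤ C)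
    (h₁ : (fun x => u₁ (T x)) =ᵐ[μ] μ[φ₁ | .comap T inferInstance])
    (h₂ : (fun x => u₂ (T x)) =ᵐ[μ] μ[φ₂ | .comap T inferInstance])
    {G : γ × γ → ℝ} (hG : Measurable G) {CG : ℝ} (hGC : ∀ x y, ‖G (T x, T y)‖ ≤ CG) :
    ∫ p, φ₁ p.1 * φ₂ p.2 * G (T p.1, T p.2) ∂(μ.prod μ)
      = ∫ p, u₁ (T p.1) * u₂ (T p.2) * G (T p.1, T p.2) ∂(μ.prod μ) := by
  calc ∫ p, φ₁ p.1 * φ₂ p.2 * G (T p.1, T p.2) ∂(μ.prod μ)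
      = ∫ p, φ₁ p.1 * G (T p.1, T p.2) * φ₂ p.2 ∂(μ.prod μ) := by
        simp only [mul_right_comm]
    _ = ∫ p, φ₁ p.1 * G (T p.1, T p.2) * u₂ (T p.2) ∂(μ.prod μ) :=
      integral_prod_mul_snd_eq_of_condExp (F := fun q => φ₁ q.1 * G (T q.1, q.2)) hT hφ₂ hφ₂C
        hu₂ hu₂C h₂ (by fun_prop) fun x y => norm_mul_le_of_le (hφ₁C x) (hGC x y)
    _ = ∫ p, u₂ (T p.1) * G (T p.2, T p.1) * φ₁ p.2 ∂(μ.prod μ) := by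
      rw [← integral_prod_swap]
      congr 1 with p
      simp only [Prod.fst_swap, Prod.snd_swap]
      ring
    _ = ∫ p, u₂ (T p.1) * G (T p.2, T p.1) * u₁ (T p.2) ∂(μ.prod μ) :=
      integral_prod_mul_snd_eq_of_condExp (F := fun q => u₂ (T q.1) * G (q.2, T q.1)) hT hφ₁ hφ₁C
        hu₁ hu₁C h₁ (by fun_prop) fun x y => norm_mul_le_of_le (hu₂C x) (hGC y x)
    _ = ∫ p, u₁ (T p.1) * u₂ (T p.2) * G (T p.1, T p.2) ∂(μ.prod μ) := by
      rw [← integral_prod_swap]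
      congr 1 with p
      simp only [Prod.fst_swap, Prod.snd_swap]
      ring

theorem map_withDensity_ofReal_apply {μ : Measure α} {f : α → ℝ} (hf : Integrable f μ)
    (hf₀ : 0 ≤ᵐ[μ] f) {T : α → β} (hT : Measurable T) {E : Set β} (hE : MeasurableSet E) :
    (μ.withDensity fun x => ENNReal.ofReal (f x)).map T E
      = ENNReal.ofReal (∫ x in T ⁻¹' E, f x ∂μ) := by
  rw [Measure.map_apply hT hE, withDensity_apply _ (hT hE),
    ofReal_integral_eq_lintegral_ofReal hf.integrableOn (ae_restrict_of_ae hf₀)]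

theorem setIntegral_preimage_eq_of_forall_prod {μ : Measure α} {T : α → β × γ}
    (hT : Measurable T) {f g : α → ℝ} (hf : Integrable f μ) (hg : Integrable g μ)
    (hf₀ : 0 ≤ᵐ[μ] f) (hg₀ : 0 ≤ᵐ[μ] g)
    (h : ∀ s t, MeasurableSet s → MeasurableSet t →
      ∫ x in T ⁻¹' (s ×ˢ t), f x ∂μ = ∫ x in T ⁻¹' (s ×ˢ t), g x ∂μ)
    {E : Set (β × γ)} (hE : MeasurableSet E) :
    ∫ x in T ⁻¹' E, f x ∂μ = ∫ x in T ⁻¹' E, g x ∂μ := by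
  have := isFiniteMeasure_withDensity_ofReal hf.2
  have := isFiniteMeasure_withDensity_ofReal hg.2
  have hmap : (μ.withDensity fun x => ENNReal.ofReal (f x)).map T
      = (μ.withDensity fun x => ENNReal.ofReal (g x)).map T := by
    refine ext_of_generate_finite _ generateFrom_prod.symm isPiSystem_prod ?_ ?_
    · rintro _ ⟨s, hs, t, ht, rfl⟩
      rw [map_withDensity_ofReal_apply hf hf₀ hT (hs.prod ht),
        map_withDensity_ofReal_apply hg hg₀ hT (hs.prod ht), h s t hs ht]
    · rw [map_withDensity_ofReal_apply hf hf₀ hT .univ,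
        map_withDensity_ofReal_apply hg hg₀ hT .univ, ← univ_prod_univ, h _ _ .univ .univ]
  have hE' := congrArg (· E) hmap
  simp only [map_withDensity_ofReal_apply hf hf₀ hT hE,
    map_withDensity_ofReal_apply hg hg₀ hT hE] at hE'
  exact (ENNReal.ofReal_eq_ofReal_iff (integral_nonneg_of_ae (ae_restrict_of_ae hf₀))
    (integral_nonneg_of_ae (ae_restrict_of_ae hg₀))).mp hE'

end Fubini

section CondIndep

variable {β γ : Type*} [MeasurableSpace β] [MeasurableSpace γ] {P : Measure Ω}
  [IsFiniteMeasure P] {X : Ω → 𝒳} {U : Ω → β} {V : Ω → γ}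

theorem CondIndepGiven.setIntegral_indicator_mul_eq (hUV : CondIndepGiven P X U V)
    (hX : Measurable X) (hV : Measurable V) {s : Set β} {t : Set γ} (hs : MeasurableSet s)
    (ht : MeasurableSet t) (hsU : Integrable (fun ω => s.indicator (fun _ => (1 : ℝ)) (U ω)) P)
    {w : 𝒳 → ℝ} (hw : Measurable w)
    (hwX : (fun ω => w (X ω)) =ᵐ[P]
      P[fun ω => s.indicator (fun _ => (1 : ℝ)) (U ω) | .comap X inferInstance])
    {B : Set 𝒳} (hB : MeasurableSet B) :
    ∫ ω in X ⁻¹' B, s.indicator (fun _ => (1 : ℝ)) (U ω) * t.indicator (fun _ => 1) (V ω) ∂P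
      = ∫ ω in X ⁻¹' B, w (X ω) * t.indicator (fun _ => 1) (V ω) ∂P := by
  have hm := hX.comap_le
  have hB' : MeasurableSet[.comap X inferInstance] (X ⁻¹' B) := ⟨B, hB, rfl⟩
  have htV : Integrable (fun ω => t.indicator (fun _ => (1 : ℝ)) (V ω)) P :=
    (integrable_const 1).indicator (hV ht)
  have hwi : Integrable (fun ω => w (X ω)) P := integrable_condExp.congr hwX.symm
  have hwX' : StronglyMeasurable[.comap X inferInstance] fun ω => w (X ω) :=
    (hw.comp (comap_measurable X)).stronglyMeasurable
  have htV₁ : ∀ᵐ ω ∂P, ‖t.indicator (fun _ => (1 : ℝ)) (V ω)‖ ≤ 1 :=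
    ae_of_all _ fun _ => (norm_indicator_le_norm_self _ _).trans_eq norm_one
  have hwtV := hwi.mul_bdd htV.aestronglyMeasurable htV₁
  rw [← setIntegral_condExp hm (hsU.mul_bdd htV.aestronglyMeasurable htV₁) hB',
    ← setIntegral_condExp hm hwtV hB']
  refine setIntegral_congr_ae (hm _ hB') ?_
  filter_upwards [hUV s t hs ht, hwX, condExp_mul_of_stronglyMeasurable_left hwX' hwtV htV]
    with ω h₁ h₂ h₃ _
  rw [h₁, ← h₂]
  exact h₃.symm

theorem CondIndepGiven.condExp_indicator_eq (hUV : CondIndepGiven P X U V) (hX : Measurable X)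
    (hU : Measurable U) (hV : Measurable V) {s : Set β} (hs : MeasurableSet s) {w : 𝒳 → ℝ}
    (hw : Measurable w)
    (hwX : (fun ω => w (X ω)) =ᵐ[P]
      P[fun ω => s.indicator (fun _ => (1 : ℝ)) (U ω) | .comap X inferInstance]) :
    (fun ω => w (X ω)) =ᵐ[P] P[fun ω => s.indicator (fun _ => (1 : ℝ)) (U ω) |
      .comap (fun ω => (V ω, X ω)) inferInstance] := by
  have hsU : Integrable (fun ω => s.indicator (fun _ => (1 : ℝ)) (U ω)) P :=
    (integrable_const 1).indicator (hU hs)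
  have hsU₀ : 0 ≤ᵐ[P] fun ω => s.indicator (fun _ => (1 : ℝ)) (U ω) :=
    ae_of_all _ fun _ => indicator_nonneg (fun _ _ => zero_le_one) _
  have hwi : Integrable (fun ω => w (X ω)) P := integrable_condExp.congr hwX.symm
  have hw₀ : 0 ≤ᵐ[P] fun ω => w (X ω) := (condExp_nonneg hsU₀).congr .rfl hwX.symm
  refine ae_eq_condExp_of_forall_setIntegral_eq (hV.prodMk hX).comap_le hsU
    (fun _ _ _ => hwi.integrableOn) ?_
    ((hw.comp measurable_snd).comp (comap_measurable _)).aestronglyMeasurable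
  rintro _ ⟨E, hE, rfl⟩ -
  refine setIntegral_preimage_eq_of_forall_prod (hV.prodMk hX) hwi hsU hw₀ hsU₀
    (fun t B ht hB => ?_) hE
  have hind : ∀ (g : Ω → ℝ) ω,
      (V ⁻¹' t).indicator g ω = g ω * t.indicator (fun _ => 1) (V ω) :=
    fun g ω => by by_cases h : V ω ∈ t <;> simp [h]
  simp only [mk_preimage_prod, inter_comm (V ⁻¹' t), ← setIntegral_indicator (hV ht), hind]
  exact (hUV.setIntegral_indicator_mul_eq hX hV hs ht hsU hw hwX hB).symm

end CondIndep

section CondProb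

variable {P : Measure Ω} {X : Ω → 𝒳} {A : Set Ω} {w : 𝒳 → ℝ}

theorem IsCondProb.ae_mem_Icc (hw : IsCondProb P X A w) : ∀ᵐ ω ∂P, w (X ω) ∈ Icc 0 1 := by
  have hA : ∀ ω, A.indicator (fun _ => (1 : ℝ)) ω ∈ Icc 0 1 := fun ω => by
    by_cases h : ω ∈ A <;> simp [h]
  filter_upwards [hw.2,
    condExp_nonneg (m := .comap X inferInstance) (ae_of_all P fun ω => (hA ω).1),
    ae_bdd_abs_condExp_of_ae_bdd_abs (m := .comap X inferInstance)
      (ae_of_all P fun ω => (abs_of_nonneg (hA ω).1).trans_le (hA ω).2)] with ω hω h₀ h₁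
  rw [hω]
  exact ⟨h₀, (le_abs_self _).trans h₁⟩

theorem IsCondProb.exists_Icc (hw : IsCondProb P X A w) {a b : ℝ} (hab : a ≤ b)
    (hwab : ∀ᵐ ω ∂P, w (X ω) ∈ Icc a b) :
    ∃ w', IsCondProb P X A w' ∧ (∀ x, w' x ∈ Icc a b) ∧
      (fun ω => w' (X ω)) =ᵐ[P] fun ω => w (X ω) := by
  have hw' : (fun ω => max a (min b (w (X ω)))) =ᵐ[P] fun ω => w (X ω) :=
    hwab.mono fun ω h => by simp only [min_eq_right h.2, max_eq_right h.1]
  exact ⟨fun x => max a (min b (w x)),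
    ⟨measurable_const.max (measurable_const.min hw.1), hw'.trans hw.2⟩,
    fun x => ⟨le_max_left _ _, max_le hab (min_le_left _ _)⟩, hw'⟩

theorem IsCondProb.ae_eq_condExp {D : Ω → ℝ} (hw : IsCondProb P X {ω | D ω = 1} w)
    (hD : ∀ ω, D ω = 0 ∨ D ω = 1) :
    (fun ω => w (X ω)) =ᵐ[P] P[D | .comap X inferInstance] := by
  have hind : {ω | D ω = 1}.indicator (fun _ => (1 : ℝ)) = D :=
    funext fun ω => by rcases hD ω with h | h <;> simp [h]
  exact hind ▸ hw.2

theorem IsCondProb.ae_eq_condExp_one_sub [IsFiniteMeasure P] {D : Ω → ℝ}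
    (hw : IsCondProb P X {ω | D ω = 1} w) (hX : Measurable X) (hD : Measurable D)
    (hD01 : ∀ ω, D ω = 0 ∨ D ω = 1) :
    (fun ω => 1 - w (X ω)) =ᵐ[P] P[fun ω => 1 - D ω | .comap X inferInstance] := by
  filter_upwards [hw.ae_eq_condExp hD01, condExp_const_sub hX.comap_le 1
    (Integrable.of_bound hD.aestronglyMeasurable 1 (ae_of_all _ fun ω =>
      norm_le_one_of_mem_Icc (mem_Icc_of_eq_zero_or_eq_one (hD01 ω))))] with ω h₁ h₂
  rw [h₁, h₂]

theorem IsCondProb.ae_eq_condExp_sub [IsFiniteMeasure P] {D0 D1 : Ω → ℝ} {p0 p1 : 𝒳 → ℝ}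
    (hp0 : IsCondProb P X {ω | D0 ω = 1} p0) (hp1 : IsCondProb P X {ω | D1 ω = 1} p1)
    (hD0 : Measurable D0) (hD1 : Measurable D1)
    (hD0_01 : ∀ ω, D0 ω = 0 ∨ D0 ω = 1) (hD1_01 : ∀ ω, D1 ω = 0 ∨ D1 ω = 1) :
    (fun ω => p1 (X ω) - p0 (X ω)) =ᵐ[P] P[fun ω => D1 ω - D0 ω | .comap X inferInstance] := by
  have hint : ∀ {D : Ω → ℝ}, Measurable D → (∀ ω, D ω = 0 ∨ D ω = 1) → Integrable D P :=
    fun hD hD01 => Integrable.of_bound hD.aestronglyMeasurable 1 (ae_of_all _ fun ω =>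
      norm_le_one_of_mem_Icc (mem_Icc_of_eq_zero_or_eq_one (hD01 ω)))
  filter_upwards [hp1.ae_eq_condExp hD1_01, hp0.ae_eq_condExp hD0_01,
    condExp_sub (hint hD1 hD1_01) (hint hD0 hD0_01) (.comap X inferInstance)] with ω h₁ h₀ h
  rw [h₁, h₀]
  exact h.symm

end CondProb

section Strata

theorem measurable_strat {D0 D1 : Ω → ℝ} (hD0 : Measurable D0) (hD1 : Measurable D1)
    (s : ℝ × ℝ) : Measurable (strat D0 D1 s) :=
  Measurable.ite ((hD1.prodMk hD0) (measurableSet_singleton s)) measurable_const measurable_const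

variable {α : Type*} {D0 D1 : α → ℝ}

theorem strat_nonneg (s : ℝ × ℝ) (a : α) : 0 ≤ strat D0 D1 s a := by
  unfold strat; split_ifs <;> norm_num

theorem norm_strat_le (s : ℝ × ℝ) (a : α) : ‖strat D0 D1 s a‖ ≤ 1 := by
  unfold strat; split_ifs <;> norm_num

theorem sum_strat_treated {a : α} (hD0 : D0 a = 0 ∨ D0 a = 1) (hD1 : D1 a = 0 ∨ D1 a = 1) :
    ∑ s ∈ ({(1, 0), (1, 1)} : Finset (ℝ × ℝ)), strat D0 D1 s a = D1 a := by
  rw [Finset.sum_pair (by norm_num)]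
  rcases hD0 with h0 | h0 <;> rcases hD1 with h1 | h1 <;> simp [strat, h0, h1]

theorem sum_strat_untreated {a : α} (hD0 : D0 a = 0 ∨ D0 a = 1) (hD1 : D1 a = 0 ∨ D1 a = 1) :
    ∑ s ∈ ({(1, 0), (0, 0)} : Finset (ℝ × ℝ)), strat D0 D1 s a = 1 - D0 a := by
  rw [Finset.sum_pair (by norm_num)]
  rcases hD0 with h0 | h0 <;> rcases hD1 with h1 | h1 <;> simp [strat, h0, h1]

theorem strat_one_zero_eq_sub {a : α} (hD0 : D0 a = 0 ∨ D0 a = 1) (hD1 : D1 a = 0 ∨ D1 a = 1)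
    (hmono : D0 a ≤ D1 a) : strat D0 D1 (1, 0) a = D1 a - D0 a := by
  rcases hD0 with h0 | h0 <;> rcases hD1 with h1 | h1 <;> simp_all [strat]
  linarith

end Strata

section PrincipalIgnorability

variable {P : Measure Ω} [IsProbabilityMeasure P] {X : Ω → 𝒳} {D0 D1 Y0 Y1 : Ω → ℝ}
  {h : ℝ → ℝ → ℝ} {μbar : 𝒳 × 𝒳 → ℝ}

theorem PPI10.condExp_treated_mul_untreated (hPPI : PPI10 P X D0 D1 Y0 Y1 h μbar)
    (hD0 : Measurable D0) (hD1 : Measurable D1) (hY0 : Measurable Y0) (hY1 : Measurable Y1)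
    (hD0_01 : ∀ ω, D0 ω = 0 ∨ D0 ω = 1) (hD1_01 : ∀ ω, D1 ω = 0 ∨ D1 ω = 1)
    (hh : Measurable fun p : ℝ × ℝ => h p.1 p.2) {C : ℝ} (hC : ∀ u v, |h u v| ≤ C) :
    (P.prod P)[fun p => h (Y1 p.1) (Y0 p.2) * (D1 p.1 * (1 - D0 p.2)) |
        .comap (fun p : Ω × Ω => (X p.1, X p.2)) inferInstance]
      =ᵐ[P.prod P] (fun p => μbar (X p.1, X p.2)) *
        (P.prod P)[fun p => D1 p.1 * (1 - D0 p.2) |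
          .comap (fun p : Ω × Ω => (X p.1, X p.2)) inferInstance] := by
  set S := ({(1, 0), (1, 1)} : Finset (ℝ × ℝ)) ×ˢ ({(1, 0), (0, 0)} : Finset (ℝ × ℝ))
  have hq : (fun p : Ω × Ω => D1 p.1 * (1 - D0 p.2))
      = ∑ s ∈ S, fun p => strat D0 D1 s.1 p.1 * strat D0 D1 s.2 p.2 := by
    funext p
    rw [Finset.sum_apply, Finset.sum_product, ← sum_strat_treated (hD0_01 p.1) (hD1_01 p.1),
      ← sum_strat_untreated (hD0_01 p.2) (hD1_01 p.2), Finset.sum_mul_sum]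
  have hf : (fun p : Ω × Ω => h (Y1 p.1) (Y0 p.2) * (D1 p.1 * (1 - D0 p.2)))
      = ∑ s ∈ S, fun p => h (Y1 p.1) (Y0 p.2) * strat D0 D1 s.1 p.1 * strat D0 D1 s.2 p.2 := by
    funext p
    rw [congrFun hq p, Finset.sum_apply, Finset.sum_apply, Finset.mul_sum]
    simp only [mul_assoc]
  have hstrat := measurable_strat hD0 hD1
  have hhY : Measurable fun p : Ω × Ω => h (Y1 p.1) (Y0 p.2) :=
    hh.comp₂ (by fun_prop) (by fun_prop)
  rw [hf, hq]
  refine condExp_finsetSum_eq_mul (fun s _ => Integrable.of_bound (by fun_prop) (C * 1 * 1)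
      (ae_of_all _ fun p => ?_)) (fun s _ => Integrable.of_bound (by fun_prop) (1 * 1)
      (ae_of_all _ fun p => ?_)) fun s hs => ?_
  · exact norm_mul_le_of_le (norm_mul_le_of_le (hC _ _) (norm_strat_le _ _)) (norm_strat_le _ _)
  · exact norm_mul_le_of_le (norm_strat_le _ _) (norm_strat_le _ _)
  · simp only [S, Finset.mem_product, Finset.mem_insert, Finset.mem_singleton] at hs
    exact hPPI.2 s.1 s.2 hs.1 hs.2

theorem PPI10.exists_bounded (hPPI : PPI10 P X D0 D1 Y0 Y1 h μbar)
    (hD0 : Measurable D0) (hD1 : Measurable D1) (hY0 : Measurable Y0) (hY1 : Measurable Y1)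
    (hD0_01 : ∀ ω, D0 ω = 0 ∨ D0 ω = 1) (hD1_01 : ∀ ω, D1 ω = 0 ∨ D1 ω = 1)
    (hh : Measurable fun p : ℝ × ℝ => h p.1 p.2) {C : ℝ} (hC : ∀ u v, |h u v| ≤ C) :
    ∃ μ' : 𝒳 × 𝒳 → ℝ, Measurable μ' ∧ (∀ y, ‖μ' y‖ ≤ C) ∧
      (P.prod P)[fun p => h (Y1 p.1) (Y0 p.2) * (D1 p.1 * (1 - D0 p.2)) |
          .comap (fun p : Ω × Ω => (X p.1, X p.2)) inferInstance]
        =ᵐ[P.prod P] (fun p => μ' (X p.1, X p.2)) *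
          (P.prod P)[fun p => D1 p.1 * (1 - D0 p.2) |
            .comap (fun p : Ω × Ω => (X p.1, X p.2)) inferInstance] ∧
      (P.prod P)[fun p => h (Y1 p.1) (Y0 p.2) * strat D0 D1 (1, 0) p.1 * strat D0 D1 (1, 0) p.2 |
          .comap (fun p : Ω × Ω => (X p.1, X p.2)) inferInstance]
        =ᵐ[P.prod P] (fun p => μ' (X p.1, X p.2)) *
          (P.prod P)[fun p => strat D0 D1 (1, 0) p.1 * strat D0 D1 (1, 0) p.2 |
            .comap (fun p : Ω × Ω => (X p.1, X p.2)) inferInstance] := by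
  have hstrat := measurable_strat hD0 hD1
  have hhY : Measurable fun p : Ω × Ω => h (Y1 p.1) (Y0 p.2) :=
    hh.comp₂ (by fun_prop) (by fun_prop)
  have hμ := hPPI.1
  have hC₀ : 0 ≤ C := (abs_nonneg _).trans (hC 0 0)
  have hhq : ∀ u v {q : ℝ}, 0 ≤ q → |h u v * q| ≤ C * q := fun u v q hq => by
    rw [abs_mul, abs_of_nonneg hq]
    exact mul_le_mul_of_nonneg_right (hC u v) hq
  have hD1' := fun ω => mem_Icc_of_eq_zero_or_eq_one (hD1_01 ω)
  have hD0' := fun ω => mem_Icc_of_eq_zero_or_eq_one (hD0_01 ω)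
  have hq₀ : ∀ p : Ω × Ω, 0 ≤ D1 p.1 * (1 - D0 p.2) := fun p =>
    mul_nonneg (hD1' _).1 (sub_nonneg.mpr (hD0' _).2)
  have hq₁ : ∀ p : Ω × Ω, ‖D1 p.1 * (1 - D0 p.2)‖ ≤ 1 * 1 := fun p =>
    norm_mul_le_of_le (norm_le_one_of_mem_Icc (hD1' _)) (norm_one_sub_le_one_of_mem_Icc (hD0' _))
  refine ⟨fun y => max (-C) (min C (μbar y)), by fun_prop, fun y =>
    abs_le.mpr ⟨le_max_left _ _, max_le (by linarith) (min_le_left _ _)⟩, ?_, ?_⟩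
  · exact condExp_eq_clamp_mul (by fun_prop)
      (Integrable.of_bound (by fun_prop) _ (ae_of_all _ hq₁)) hq₀ (fun p => hhq _ _ (hq₀ p))
      (hPPI.condExp_treated_mul_untreated hD0 hD1 hY0 hY1 hD0_01 hD1_01 hh hC)
  · refine condExp_eq_clamp_mul (by fun_prop) (Integrable.of_bound (by fun_prop) (1 * 1)
      (ae_of_all _ fun p => norm_mul_le_of_le (norm_strat_le _ _) (norm_strat_le _ _)))
      (fun p => mul_nonneg (strat_nonneg _ _) (strat_nonneg _ _)) (fun p => ?_)
      (hPPI.2 (1, 0) (1, 0) (Or.inl rfl) (Or.inl rfl))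
    rw [mul_assoc]
    exact hhq _ _ (mul_nonneg (strat_nonneg _ _) (strat_nonneg _ _))

end PrincipalIgnorability

theorem integral_wplus_mul_wminus_congr {γ : Type*} {P : Measure Ω} {X : Ω → γ}
    {Z D0 D1 Y0 Y1 : Ω → ℝ} {h : ℝ → ℝ → ℝ} {π p0 p1 π' p0' p1' : γ → ℝ}
    (h' : ∀ᵐ ω ∂P, π (X ω) = π' (X ω) ∧ p0 (X ω) = p0' (X ω) ∧ p1 (X ω) = p1' (X ω)) :
    ∫ p, wplus π p0 p1 X Z (Dobs Z D0 D1) p.1 * wminus π p0 p1 X Z (Dobs Z D0 D1) p.2 *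
        h (Yobs Z Y0 Y1 p.1) (Yobs Z Y0 Y1 p.2) ∂(P.prod P)
      = ∫ p, wplus π' p0' p1' X Z (Dobs Z D0 D1) p.1 * wminus π' p0' p1' X Z (Dobs Z D0 D1) p.2 *
        h (Yobs Z Y0 Y1 p.1) (Yobs Z Y0 Y1 p.2) ∂(P.prod P) := by
  refine integral_congr_ae ?_
  filter_upwards [Measure.quasiMeasurePreserving_fst.ae h',
    Measure.quasiMeasurePreserving_snd.ae h'] with p h₁ h₂
  simp only [wplus, wminus, h₁, h₂]

section Identification

variable {P : Measure Ω} [IsProbabilityMeasure P] {X : Ω → 𝒳} {Z D0 D1 Y0 Y1 : Ω → ℝ}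
  {h : ℝ → ℝ → ℝ} {μbar : 𝒳 × 𝒳 → ℝ} {π p0 p1 : 𝒳 → ℝ} {ε : ℝ}

theorem CondIndepGiven.ae_eq_condExp_treatment
    (hign : CondIndepGiven P X Z (fun ω => (D0 ω, D1 ω, Y0 ω, Y1 ω)))
    (hX : Measurable X) (hZ : Measurable Z) (hD0 : Measurable D0) (hD1 : Measurable D1)
    (hY0 : Measurable Y0) (hY1 : Measurable Y1) (hZ01 : ∀ ω, Z ω = 0 ∨ Z ω = 1)
    (hπ : IsCondProb P X {ω | Z ω = 1} π) :
    (fun ω => π (X ω)) =ᵐ[P]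
      P[Z | .comap (fun ω => ((D0 ω, D1 ω, Y0 ω, Y1 ω), X ω)) inferInstance] := by
  have hind : (fun ω => ({1} : Set ℝ).indicator (fun _ => (1 : ℝ)) (Z ω)) = Z :=
    funext fun ω => by rcases hZ01 ω with h | h <;> simp [h]
  have h := hign.condExp_indicator_eq hX hZ (by fun_prop) (measurableSet_singleton 1) hπ.1 hπ.2
  rwa [hind] at h

theorem integral_wplus_mul_wminus_eq (hε : 0 < ε)
    (hX : Measurable X) (hZ : Measurable Z) (hD0 : Measurable D0) (hD1 : Measurable D1)
    (hY0 : Measurable Y0) (hY1 : Measurable Y1) (hZ01 : ∀ ω, Z ω = 0 ∨ Z ω = 1)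
    (hD0_01 : ∀ ω, D0 ω = 0 ∨ D0 ω = 1) (hD1_01 : ∀ ω, D1 ω = 0 ∨ D1 ω = 1)
    (hπ : IsCondProb P X {ω | Z ω = 1} π) (hπb : ∀ x, π x ∈ Icc ε (1 - ε))
    (hp0 : Measurable p0) (hp1 : Measurable p1)
    (hp0b : ∀ x, p0 x ∈ Icc 0 (1 - ε)) (hp1b : ∀ x, p1 x ∈ Icc ε 1)
    (hign : CondIndepGiven P X Z (fun ω => (D0 ω, D1 ω, Y0 ω, Y1 ω)))
    (hh : Measurable fun p : ℝ × ℝ => h p.1 p.2) {C : ℝ} (hC : ∀ u v, |h u v| ≤ C) :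
    ∫ p, wplus π p0 p1 X Z (Dobs Z D0 D1) p.1 * wminus π p0 p1 X Z (Dobs Z D0 D1) p.2 *
        h (Yobs Z Y0 Y1 p.1) (Yobs Z Y0 Y1 p.2) ∂(P.prod P)
      = ∫ p, (p1 (X p.1) - p0 (X p.1)) / p1 (X p.1) *
          ((p1 (X p.2) - p0 (X p.2)) / (1 - p0 (X p.2))) *
          (h (Y1 p.1) (Y0 p.2) * (D1 p.1 * (1 - D0 p.2))) ∂(P.prod P) := by
  set T := fun ω => ((D0 ω, D1 ω, Y0 ω, Y1 ω), X ω)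
  set cplus := fun x => (p1 x - p0 x) / (π x * p1 x)
  set cminus := fun x => (p1 x - p0 x) / ((1 - π x) * (1 - p0 x))
  -- `G (T ω₁, T ω₂)` is the weighted integrand with `Z ω₁ = 1` and `Z ω₂ = 0`.
  set G : ((ℝ × ℝ × ℝ × ℝ) × 𝒳) × ((ℝ × ℝ × ℝ × ℝ) × 𝒳) → ℝ := fun q =>
    cplus q.1.2 * cminus q.2.2 * (h q.1.1.2.2.2 q.2.1.2.2.1 * (q.1.1.2.1 * (1 - q.2.1.1)))
  have hT : Measurable T := by fun_prop
  have hπm := hπ.1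
  have hG : Measurable G := by
    have : Measurable fun q : ((ℝ × ℝ × ℝ × ℝ) × 𝒳) × ((ℝ × ℝ × ℝ × ℝ) × 𝒳) =>
        h q.1.1.2.2.2 q.2.1.2.2.1 := hh.comp₂ (by fun_prop) (by fun_prop)
    fun_prop
  have hε2 : 0 < ε * ε := mul_pos hε hε
  have he : ∀ x, ‖p1 x - p0 x‖ ≤ 1 := fun x => norm_sub_le_one_of_mem_Icc
    (Icc_subset_Icc hε.le le_rfl (hp1b x)) (Icc_subset_Icc le_rfl (by linarith) (hp0b x))
  have hcplus : ∀ x, ‖cplus x‖ ≤ 1 / (ε * ε) := fun x => norm_div_le_div_of_le (he x) hε2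
    (mul_le_mul (hπb x).1 (hp1b x).1 hε.le (hε.le.trans (hπb x).1))
  have hcminus : ∀ x, ‖cminus x‖ ≤ 1 / (ε * ε) := fun x => norm_div_le_div_of_le (he x) hε2
    (mul_le_mul (by linarith [(hπb x).2]) (by linarith [(hp0b x).2]) hε.le
      (by linarith [(hπb x).2]))
  have hGC : ∀ ω₁ ω₂, ‖G (T ω₁, T ω₂)‖ ≤ 1 / (ε * ε) * (1 / (ε * ε)) * (C * (1 * 1)) :=
    fun ω₁ ω₂ => norm_mul_le_of_le (norm_mul_le_of_le (hcplus _) (hcminus _))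
      (norm_mul_le_of_le (hC _ _) (norm_mul_le_of_le
        (norm_le_one_of_mem_Icc (mem_Icc_of_eq_zero_or_eq_one (hD1_01 _)))
        (norm_one_sub_le_one_of_mem_Icc (mem_Icc_of_eq_zero_or_eq_one (hD0_01 _)))))
  have hπ01 : ∀ x, π x ∈ Icc 0 1 := fun x => Icc_subset_Icc hε.le (by linarith) (hπb x)
  have hZ01' := fun ω => mem_Icc_of_eq_zero_or_eq_one (hZ01 ω)
  have hπT := hign.ae_eq_condExp_treatment hX hZ hD0 hD1 hY0 hY1 hZ01 hπ
  have h1πT : (fun ω => 1 - π (X ω)) =ᵐ[P] P[fun ω => 1 - Z ω | .comap T inferInstance] := by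
    filter_upwards [hπT, condExp_const_sub hT.comap_le 1 (Integrable.of_bound
      hZ.aestronglyMeasurable 1 (ae_of_all _ fun ω => norm_le_one_of_mem_Icc (hZ01' ω)))]
      with ω h₁ h₂
    rw [h₁, h₂]
  calc _ = ∫ p, Z p.1 * (1 - Z p.2) * G (T p.1, T p.2) ∂(P.prod P) := by
        congr 1 with p
        simp only [wplus, wminus, Dobs, Yobs, G, T, cplus, cminus]
        rcases hZ01 p.1 with h₁ | h₁ <;> rcases hZ01 p.2 with h₂ | h₂ <;> simp [h₁, h₂]
        ring
    _ = ∫ p, π (X p.1) * (1 - π (X p.2)) * G (T p.1, T p.2) ∂(P.prod P) :=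
      integral_prod_mul_mul_eq_of_condExp (u₁ := fun y => π y.2) (u₂ := fun y => 1 - π y.2)
        hT hZ (by fun_prop) (by fun_prop) (by fun_prop)
        (fun ω => norm_le_one_of_mem_Icc (hZ01' ω))
        (fun ω => norm_one_sub_le_one_of_mem_Icc (hZ01' ω))
        (fun ω => norm_le_one_of_mem_Icc (hπ01 _))
        (fun ω => norm_one_sub_le_one_of_mem_Icc (hπ01 _)) hπT h1πT hG hGC
    _ = _ := by
      congr 1 with p
      have h₁ : π (X p.1) ≠ 0 := (hε.trans_le (hπb _).1).ne'
      have h₂ : 1 - π (X p.2) ≠ 0 := by linarith [(hπb (X p.2)).2]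
      have h₃ : p1 (X p.1) ≠ 0 := (hε.trans_le (hp1b _).1).ne'
      have h₄ : 1 - p0 (X p.2) ≠ 0 := by linarith [(hp0b (X p.2)).2]
      simp only [G, T, cplus, cminus]
      field_simp

theorem integral_principal_score_weighted_eq (hε : 0 < ε) (hX : Measurable X)
    (hD0 : Measurable D0) (hD1 : Measurable D1) (hY0 : Measurable Y0) (hY1 : Measurable Y1)
    (hD0_01 : ∀ ω, D0 ω = 0 ∨ D0 ω = 1) (hD1_01 : ∀ ω, D1 ω = 0 ∨ D1 ω = 1)
    (hp0 : IsCondProb P X {ω | D0 ω = 1} p0) (hp1 : IsCondProb P X {ω | D1 ω = 1} p1)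
    (hp0b : ∀ x, p0 x ∈ Icc 0 (1 - ε)) (hp1b : ∀ x, p1 x ∈ Icc ε 1)
    (hh : Measurable fun p : ℝ × ℝ => h p.1 p.2) {C : ℝ} (hC : ∀ u v, |h u v| ≤ C)
    (hμ : Measurable μbar) (hμC : ∀ y, ‖μbar y‖ ≤ C)
    (hμbar : (P.prod P)[fun p => h (Y1 p.1) (Y0 p.2) * (D1 p.1 * (1 - D0 p.2)) |
        .comap (fun p : Ω × Ω => (X p.1, X p.2)) inferInstance]
      =ᵐ[P.prod P] (fun p => μbar (X p.1, X p.2)) *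
        (P.prod P)[fun p => D1 p.1 * (1 - D0 p.2) |
          .comap (fun p : Ω × Ω => (X p.1, X p.2)) inferInstance]) :
    ∫ p, (p1 (X p.1) - p0 (X p.1)) / p1 (X p.1) *
        ((p1 (X p.2) - p0 (X p.2)) / (1 - p0 (X p.2))) *
        (h (Y1 p.1) (Y0 p.2) * (D1 p.1 * (1 - D0 p.2))) ∂(P.prod P)
      = ∫ p, (p1 (X p.1) - p0 (X p.1)) * (p1 (X p.2) - p0 (X p.2)) *
          μbar (X p.1, X p.2) ∂(P.prod P) := by
  set K : 𝒳 × 𝒳 → ℝ := fun y =>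
    (p1 y.1 - p0 y.1) / p1 y.1 * ((p1 y.2 - p0 y.2) / (1 - p0 y.2))
  have hW : Measurable fun p : Ω × Ω => (X p.1, X p.2) := by fun_prop
  have hp0m := hp0.1
  have hp1m := hp1.1
  have hK : Measurable K := by fun_prop
  have hhY : Measurable fun p : Ω × Ω => h (Y1 p.1) (Y0 p.2) :=
    hh.comp₂ (by fun_prop) (by fun_prop)
  have hp0' : ∀ x, p0 x ∈ Icc 0 1 := fun x => Icc_subset_Icc le_rfl (by linarith) (hp0b x)
  have hp1' : ∀ x, p1 x ∈ Icc 0 1 := fun x => Icc_subset_Icc hε.le le_rfl (hp1b x)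
  have he : ∀ x, ‖p1 x - p0 x‖ ≤ 1 := fun x => norm_sub_le_one_of_mem_Icc (hp1' x) (hp0' x)
  have hKC : ∀ y, ‖K y‖ ≤ 1 / ε * (1 / ε) := fun y => norm_mul_le_of_le
    (norm_div_le_div_of_le (he _) hε (hp1b _).1)
    (norm_div_le_div_of_le (he _) hε (by linarith [(hp0b y.2).2]))
  have hD1' := fun ω => mem_Icc_of_eq_zero_or_eq_one (hD1_01 ω)
  have hD0' := fun ω => mem_Icc_of_eq_zero_or_eq_one (hD0_01 ω)
  have hqC : ∀ p : Ω × Ω, ‖D1 p.1 * (1 - D0 p.2)‖ ≤ 1 * 1 := fun p =>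
    norm_mul_le_of_le (norm_le_one_of_mem_Icc (hD1' _)) (norm_one_sub_le_one_of_mem_Icc (hD0' _))
  calc _ = ∫ p, K (X p.1, X p.2) * (h (Y1 p.1) (Y0 p.2) * (D1 p.1 * (1 - D0 p.2)))
        ∂(P.prod P) := rfl
    _ = ∫ p, K (X p.1, X p.2) * μbar (X p.1, X p.2) * (D1 p.1 * (1 - D0 p.2)) ∂(P.prod P) :=
      integral_mul_eq_of_condExp_eq_mul hW.comap_le
        (Integrable.of_bound (by fun_prop) (C * (1 * 1))
          (ae_of_all _ fun p => norm_mul_le_of_le (hC _ _) (hqC p)))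
        (Integrable.of_bound (by fun_prop) (1 * 1) (ae_of_all _ hqC))
        (hμ.comp (comap_measurable _)).stronglyMeasurable (fun _ => hμC _)
        (hK.comp (comap_measurable _)).stronglyMeasurable (fun _ => hKC _) hμbar
    _ = ∫ p, D1 p.1 * (1 - D0 p.2) * (K * μbar) (X p.1, X p.2) ∂(P.prod P) := by
      congr 1 with p
      simp only [Pi.mul_apply]
      ring
    _ = ∫ p, p1 (X p.1) * (1 - p0 (X p.2)) * (K * μbar) (X p.1, X p.2) ∂(P.prod P) :=
      integral_prod_mul_mul_eq_of_condExp (u₂ := fun x => 1 - p0 x) hX hD1 (by fun_prop) hp1m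
        (by fun_prop) (fun ω => norm_le_one_of_mem_Icc (hD1' ω))
        (fun ω => norm_one_sub_le_one_of_mem_Icc (hD0' ω))
        (fun ω => norm_le_one_of_mem_Icc (hp1' _))
        (fun ω => norm_one_sub_le_one_of_mem_Icc (hp0' _)) (hp1.ae_eq_condExp hD1_01)
        (hp0.ae_eq_condExp_one_sub hX hD0 hD0_01) (hK.mul hμ)
        fun _ _ => norm_mul_le_of_le (hKC _) (hμC _)
    _ = _ := by
      congr 1 with p
      have h₁ : p1 (X p.1) ≠ 0 := (hε.trans_le (hp1b _).1).ne'
      have h₂ : 1 - p0 (X p.2) ≠ 0 := by linarith [(hp0b (X p.2)).2]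
      simp only [Pi.mul_apply, K]
      field_simp

theorem tauN10_eq_integral (hX : Measurable X) (hD0 : Measurable D0) (hD1 : Measurable D1)
    (hY0 : Measurable Y0) (hY1 : Measurable Y1)
    (hD0_01 : ∀ ω, D0 ω = 0 ∨ D0 ω = 1) (hD1_01 : ∀ ω, D1 ω = 0 ∨ D1 ω = 1)
    (hmono : ∀ᵐ ω ∂P, D0 ω ≤ D1 ω)
    (hp0 : IsCondProb P X {ω | D0 ω = 1} p0) (hp1 : IsCondProb P X {ω | D1 ω = 1} p1)
    (hp0b : ∀ x, p0 x ∈ Icc 0 1) (hp1b : ∀ x, p1 x ∈ Icc 0 1)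
    (hh : Measurable fun p : ℝ × ℝ => h p.1 p.2) {C : ℝ} (hC : ∀ u v, |h u v| ≤ C)
    (hμ : Measurable μbar) (hμC : ∀ y, ‖μbar y‖ ≤ C)
    (hμbar : (P.prod P)[fun p => h (Y1 p.1) (Y0 p.2) * strat D0 D1 (1, 0) p.1 *
        strat D0 D1 (1, 0) p.2 | .comap (fun p : Ω × Ω => (X p.1, X p.2)) inferInstance]
      =ᵐ[P.prod P] (fun p => μbar (X p.1, X p.2)) *
        (P.prod P)[fun p => strat D0 D1 (1, 0) p.1 * strat D0 D1 (1, 0) p.2 |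
          .comap (fun p : Ω × Ω => (X p.1, X p.2)) inferInstance]) :
    tauN10 P D0 D1 Y0 Y1 h = ∫ p, (p1 (X p.1) - p0 (X p.1)) * (p1 (X p.2) - p0 (X p.2)) *
      μbar (X p.1, X p.2) ∂(P.prod P) := by
  have hW : Measurable fun p : Ω × Ω => (X p.1, X p.2) := by fun_prop
  have hstrat := measurable_strat hD0 hD1
  have hhY : Measurable fun p : Ω × Ω => h (Y1 p.1) (Y0 p.2) :=
    hh.comp₂ (by fun_prop) (by fun_prop)
  have hDC : ∀ ω, ‖D1 ω - D0 ω‖ ≤ 1 := fun ω => norm_sub_le_one_of_mem_Icc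
    (mem_Icc_of_eq_zero_or_eq_one (hD1_01 ω)) (mem_Icc_of_eq_zero_or_eq_one (hD0_01 ω))
  have hpC : ∀ x, ‖p1 x - p0 x‖ ≤ 1 := fun x => norm_sub_le_one_of_mem_Icc (hp1b x) (hp0b x)
  have he := hp0.ae_eq_condExp_sub hp1 hD0 hD1 hD0_01 hD1_01
  calc tauN10 P D0 D1 Y0 Y1 h
      = ∫ p, 1 * (h (Y1 p.1) (Y0 p.2) * strat D0 D1 (1, 0) p.1 * strat D0 D1 (1, 0) p.2)
          ∂(P.prod P) := by simp only [tauN10, one_mul]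
    _ = ∫ p, 1 * μbar (X p.1, X p.2) * (strat D0 D1 (1, 0) p.1 * strat D0 D1 (1, 0) p.2)
          ∂(P.prod P) :=
      integral_mul_eq_of_condExp_eq_mul hW.comap_le
        (Integrable.of_bound (by fun_prop) (C * 1 * 1) (ae_of_all _ fun p =>
          norm_mul_le_of_le (norm_mul_le_of_le (hC _ _) (norm_strat_le _ _)) (norm_strat_le _ _)))
        (Integrable.of_bound (by fun_prop) (1 * 1) (ae_of_all _ fun p =>
          norm_mul_le_of_le (norm_strat_le _ _) (norm_strat_le _ _)))
        (hμ.comp (comap_measurable _)).stronglyMeasurable (fun _ => hμC _)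
        stronglyMeasurable_const (fun _ => norm_one.le) hμbar
    _ = ∫ p, (D1 p.1 - D0 p.1) * (D1 p.2 - D0 p.2) * μbar (X p.1, X p.2) ∂(P.prod P) := by
      refine integral_congr_ae ?_
      filter_upwards [Measure.quasiMeasurePreserving_fst.ae hmono,
        Measure.quasiMeasurePreserving_snd.ae hmono] with p h₁ h₂
      rw [strat_one_zero_eq_sub (hD0_01 _) (hD1_01 _) h₁,
        strat_one_zero_eq_sub (hD0_01 _) (hD1_01 _) h₂]
      ring
    _ = _ := integral_prod_mul_mul_eq_of_condExp hX (hD1.sub hD0) (hD1.sub hD0)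
      (hp1.1.sub hp0.1) (hp1.1.sub hp0.1) hDC hDC (fun _ => hpC _) (fun _ => hpC _) he he hμ
      fun _ _ => hμC _

end Identification

theorem weighting_identification_10_general
    (P : Measure Ω) [IsProbabilityMeasure P]
    (X : Ω → 𝒳) (Z D0 D1 Y0 Y1 : Ω → ℝ)
    (hX : Measurable X) (hZ : Measurable Z) (hD0 : Measurable D0) (hD1 : Measurable D1)
    (hY0 : Measurable Y0) (hY1 : Measurable Y1)
    (hZ01 : ∀ ω, Z ω = 0 ∨ Z ω = 1)
    (hD0_01 : ∀ ω, D0 ω = 0 ∨ D0 ω = 1) (hD1_01 : ∀ ω, D1 ω = 0 ∨ D1 ω = 1)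
    -- π, p₀, p₁ are σ(X)-measurable versions of P(Z=1|σ(X)), P(D(0)=1|σ(X)), P(D(1)=1|σ(X))
    (πf p0f p1f : 𝒳 → ℝ)
    (hπ : IsCondProb P X {ω | Z ω = 1} πf)
    (hp0 : IsCondProb P X {ω | D0 ω = 1} p0f) (hp1 : IsCondProb P X {ω | D1 ω = 1} p1f)
    -- treatment ignorability: Z ⫫ (D(0), D(1), Y(0), Y(1)) | σ(X)
    (hign : CondIndepGiven P X Z (fun ω => (D0 ω, D1 ω, Y0 ω, Y1 ω)))
    -- monotonicity
    (hmono : ∀ᵐ ω ∂P, D0 ω ≤ D1 ω)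
    -- overlap
    (ε : ℝ) (hε : 0 < ε) (hε' : ε < 1 / 2)
    (hover : ∀ᵐ ω ∂P, (ε < πf (X ω) ∧ πf (X ω) < 1 - ε) ∧
      ε < p1f (X ω) ∧ ε < 1 - p0f (X ω))
    -- bounded measurable contrast function
    (h : ℝ → ℝ → ℝ) (hh : Measurable fun p : ℝ × ℝ => h p.1 p.2)
    (hhbd : ∃ C, ∀ u v, |h u v| ≤ C)
    -- pairwise principal ignorability for stratum 10
    (μbar : 𝒳 × 𝒳 → ℝ) (hPPI : PPI10 P X D0 D1 Y0 Y1 h μbar) :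
    ∫ p, wplus πf p0f p1f X Z (Dobs Z D0 D1) p.1 *
          wminus πf p0f p1f X Z (Dobs Z D0 D1) p.2 *
          h (Yobs Z Y0 Y1 p.1) (Yobs Z Y0 Y1 p.2) ∂(P.prod P)
      = tauN10 P D0 D1 Y0 Y1 h := by
  obtain ⟨C, hC⟩ := hhbd
  obtain ⟨πt, hπt, hπtb, hπtπ⟩ := hπ.exists_Icc (by linarith)
    (hover.mono fun ω h => ⟨h.1.1.le, h.1.2.le⟩)
  obtain ⟨p0t, hp0t, hp0tb, hp0tp0⟩ := hp0.exists_Icc (a := 0) (b := 1 - ε) (by linarith) <| by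
    filter_upwards [hover, hp0.ae_mem_Icc] with ω h h01
    exact ⟨h01.1, by linarith [h.2.2]⟩
  obtain ⟨p1t, hp1t, hp1tb, hp1tp1⟩ := hp1.exists_Icc (a := ε) (b := 1) (by linarith) <| by
    filter_upwards [hover, hp1.ae_mem_Icc] with ω h h01
    exact ⟨h.2.1.le, h01.2⟩
  obtain ⟨μt, hμt, hμtC, hμt11, hμt10⟩ :=
    hPPI.exists_bounded hD0 hD1 hY0 hY1 hD0_01 hD1_01 hh hC
  rw [integral_wplus_mul_wminus_congr (π' := πt) (p0' := p0t) (p1' := p1t) <| by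
      filter_upwards [hπtπ, hp0tp0, hp1tp1] with ω h₁ h₂ h₃
      exact ⟨h₁.symm, h₂.symm, h₃.symm⟩,
    integral_wplus_mul_wminus_eq hε hX hZ hD0 hD1 hY0 hY1 hZ01 hD0_01 hD1_01 hπt hπtb hp0t.1
      hp1t.1 hp0tb hp1tb hign hh hC,
    integral_principal_score_weighted_eq hε hX hD0 hD1 hY0 hY1 hD0_01 hD1_01 hp0t hp1t hp0tb
      hp1tb hh hC hμt hμtC hμt11]
  exact (tauN10_eq_integral hX hD0 hD1 hY0 hY1 hD0_01 hD1_01 hmono hp0t hp1t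
    (fun x => Icc_subset_Icc le_rfl (by linarith) (hp0tb x))
    (fun x => Icc_subset_Icc hε.le le_rfl (hp1tb x)) hh hC hμt hμtC hμt10).symm

/-- **Propensity-score-and-principal-score weighting identification of `τ_{h,N}^{10}`.**
Under treatment ignorability, monotonicity, overlap, and pairwise principal ignorability
for stratum 10,
`E[ w⁺(O₁)·w⁻(O₂)·h(Y₁, Y₂) ] = τ_{h,N}^{10}`. -/
theorem weighting_identification_10 [StandardBorelSpace 𝒳]
    (P : Measure Ω) [IsProbabilityMeasure P]
    (X : Ω → 𝒳) (Z D0 D1 Y0 Y1 : Ω → ℝ)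
    (hX : Measurable X) (hZ : Measurable Z) (hD0 : Measurable D0) (hD1 : Measurable D1)
    (hY0 : Measurable Y0) (hY1 : Measurable Y1)
    (hZ01 : ∀ ω, Z ω = 0 ∨ Z ω = 1)
    (hD0_01 : ∀ ω, D0 ω = 0 ∨ D0 ω = 1) (hD1_01 : ∀ ω, D1 ω = 0 ∨ D1 ω = 1)
    -- π, p₀, p₁ are σ(X)-measurable versions of P(Z=1|σ(X)), P(D(0)=1|σ(X)), P(D(1)=1|σ(X))
    (πf p0f p1f : 𝒳 → ℝ)
    (hπ : IsCondProb P X {ω | Z ω = 1} πf)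
    (hp0 : IsCondProb P X {ω | D0 ω = 1} p0f) (hp1 : IsCondProb P X {ω | D1 ω = 1} p1f)
    -- treatment ignorability: Z ⫫ (D(0), D(1), Y(0), Y(1)) | σ(X)
    (hign : CondIndepGiven P X Z (fun ω => (D0 ω, D1 ω, Y0 ω, Y1 ω)))
    -- monotonicity
    (hmono : ∀ᵐ ω ∂P, D0 ω ≤ D1 ω)
    -- overlap
    (ε : ℝ) (hε : 0 < ε) (hε' : ε < 1 / 2)
    (hover : ∀ᵐ ω ∂P, (ε < πf (X ω) ∧ πf (X ω) < 1 - ε) ∧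
      ε < p1f (X ω) ∧ ε < 1 - p0f (X ω))
    -- bounded measurable contrast function
    (h : ℝ → ℝ → ℝ) (hh : Measurable fun p : ℝ × ℝ => h p.1 p.2)
    (hhbd : ∃ C, ∀ u v, |h u v| ≤ C)
    -- pairwise principal ignorability for stratum 10
    (μbar : 𝒳 × 𝒳 → ℝ) (hPPI : PPI10 P X D0 D1 Y0 Y1 h μbar) :
    ∫ p, wplus πf p0f p1f X Z (Dobs Z D0 D1) p.1 *
          wminus πf p0f p1f X Z (Dobs Z D0 D1) p.2 *
          h (Yobs Z Y0 Y1 p.1) (Yobs Z Y0 Y1 p.2) ∂(P.prod P)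
      = tauN10 P D0 D1 Y0 Y1 h :=
  weighting_identification_10_general P X Z D0 D1 Y0 Y1 hX hZ hD0 hD1 hY0 hY1 hZ01 hD0_01 hD1_01 πf
    p0f p1f hπ hp0 hp1 hign hmono ε hε hε' hover h hh hhbd μbar hPPI
end
end

section
/- Sensitivity-analysis principal score formulas without monotonicity: let D(0), D(1) be {0,1}-valued random variables, let p_z(X) be a σ(X)-measurable version of P(D(z)=1 | σ(X)) for z ∈ {0,1}, and for each stratum s ∈ {10, 01, 00, 11} let e_s(X) be a σ(X)-measurable version of P(S = s | σ(X)). Suppose there is a σ(X)-measurable sensitivity function η(X) with η(X) ≥ 0 and η(X) ≠ 1 almost surely such that e_01(X) = η(X)·e_10(X) almost surely. Then, almost surely, e_10(X) = (p_1(X) − p_0(X))/(1 − η(X)), e_01(X) = η(X)·(p_1(X) − p_0(X))/(1 − η(X)), e_00(X) = 1 − p_0(X) − (p_1(X) − p_0(X))/(1 − η(X)), and e_11(X) = p_1(X) − (p_1(X) − p_0(X))/(1 − η(X)). -/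
open MeasureTheory ProbabilityTheory Set

noncomputable section

variable {Ω 𝒳 : Type*} [MeasurableSpace Ω] [MeasurableSpace 𝒳]

/-
From the stratum decomposition {D(1)=1} = S10 ⊔ S11, {D(0)=1} = S01 ⊔ S11 and
{D(1)=1}ᶜ = S00 ⊔ S01, additivity of conditional probabilities gives, almost surely,
p₁ = e₁₀ + e₁₁, p₀ = e₀₁ + e₁₁ and 1 - p₁ = e₀₀ + e₀₁. Hence p₁ - p₀ = e₁₀ - e₀₁ = (1 - η) e₁₀,
and dividing by 1 - η ≠ 0 determines e₁₀ and then the other three principal scores.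
-/

namespace IsCondProb

variable {P : Measure Ω} {X : Ω → 𝒳} {A B : Set Ω} {u v : 𝒳 → ℝ}

theorem comp_ae_eq (hu : IsCondProb P X A u) (hv : IsCondProb P X A v) :
    (fun ω => u (X ω)) =ᵐ[P] fun ω => v (X ω) :=
  hu.2.trans hv.2.symm

variable [IsFiniteMeasure P]

theorem union (hAB : Disjoint A B) (hA : MeasurableSet A) (hB : MeasurableSet B)
    (hu : IsCondProb P X A u) (hv : IsCondProb P X B v) :
    IsCondProb P X (A ∪ B) (u + v) := by
  refine ⟨hu.1.add hv.1, ?_⟩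
  rw [indicator_union_of_disjoint hAB]
  exact (hu.2.add hv.2).trans
    (condExp_add ((integrable_const 1).indicator hA) ((integrable_const 1).indicator hB) _).symm

theorem compl_s16 (hX : Measurable X) (hA : MeasurableSet A)
    (hu : IsCondProb P X A u) : IsCondProb P X Aᶜ (1 - u) := by
  refine ⟨measurable_const.sub hu.1, ?_⟩
  rw [indicator_compl]
  refine ((condExp_const hX.comap_le (1 : ℝ)).symm.eventuallyEq.sub hu.2).trans
    (condExp_sub (integrable_const 1) ((integrable_const 1).indicator hA) _).symm

end IsCondProb

theorem principal_scores_of_odds {K : Type*} [Field K] {p₀ p₁ e₁₀ e₀₁ e₀₀ e₁₁ η : K}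
    (hη : η ≠ 1) (hp₁ : p₁ = e₁₀ + e₁₁) (hp₀ : p₀ = e₀₁ + e₁₁) (hp₁c : 1 - p₁ = e₀₀ + e₀₁)
    (hodds : e₀₁ = η * e₁₀) :
    e₁₀ = (p₁ - p₀) / (1 - η) ∧ e₀₁ = η * (p₁ - p₀) / (1 - η) ∧
      e₀₀ = 1 - p₀ - (p₁ - p₀) / (1 - η) ∧ e₁₁ = p₁ - (p₁ - p₀) / (1 - η) := by
  have h₁₀ : e₁₀ = (p₁ - p₀) / (1 - η) := by
    rw [eq_div_iff (sub_ne_zero.mpr hη.symm)]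
    linear_combination hp₀ - hp₁ + hodds
  refine ⟨h₁₀, by rw [hodds, h₁₀, mul_div_assoc], ?_, ?_⟩ <;> rw [← h₁₀]
  · linear_combination hp₀ - hp₁ - hp₁c
  · linear_combination -hp₁

theorem sensitivity_principal_scores_general
    (P : Measure Ω) [IsProbabilityMeasure P]
    (X : Ω → 𝒳) (D0 D1 : Ω → ℝ)
    (hX : Measurable X) (hD0 : Measurable D0) (hD1 : Measurable D1)
    (hD0_01 : ∀ ω, D0 ω = 0 ∨ D0 ω = 1) (hD1_01 : ∀ ω, D1 ω = 0 ∨ D1 ω = 1)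
    -- p_z is a σ(X)-measurable version of P(D(z)=1 | σ(X)), for z ∈ {0,1}
    (p0f p1f : 𝒳 → ℝ)
    (hp0 : IsCondProb P X {ω | D0 ω = 1} p0f) (hp1 : IsCondProb P X {ω | D1 ω = 1} p1f)
    -- e_s is a σ(X)-measurable version of P(S = s | σ(X)), for each stratum s
    (e10f e01f e00f e11f : 𝒳 → ℝ)
    (he10 : IsCondProb P X {ω | D1 ω = 1 ∧ D0 ω = 0} e10f)
    (he01 : IsCondProb P X {ω | D1 ω = 0 ∧ D0 ω = 1} e01f)
    (he00 : IsCondProb P X {ω | D1 ω = 0 ∧ D0 ω = 0} e00f)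
    (he11 : IsCondProb P X {ω | D1 ω = 1 ∧ D0 ω = 1} e11f)
    -- the σ(X)-measurable sensitivity function η, with η(X) ≥ 0 and η(X) ≠ 1 a.s.
    (η : 𝒳 → ℝ)
    (hηr : ∀ᵐ ω ∂P, 0 ≤ η (X ω) ∧ η (X ω) ≠ 1)
    -- e_01(X) = η(X)·e_10(X) almost surely
    (hrel : (fun ω => e01f (X ω)) =ᵐ[P] fun ω => η (X ω) * e10f (X ω)) :
    ((fun ω => e10f (X ω)) =ᵐ[P]
        fun ω => (p1f (X ω) - p0f (X ω)) / (1 - η (X ω))) ∧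
    ((fun ω => e01f (X ω)) =ᵐ[P]
        fun ω => η (X ω) * (p1f (X ω) - p0f (X ω)) / (1 - η (X ω))) ∧
    ((fun ω => e00f (X ω)) =ᵐ[P]
        fun ω => 1 - p0f (X ω) - (p1f (X ω) - p0f (X ω)) / (1 - η (X ω))) ∧
    ((fun ω => e11f (X ω)) =ᵐ[P]
        fun ω => p1f (X ω) - (p1f (X ω) - p0f (X ω)) / (1 - η (X ω))) := by
  have hS1 : {ω | D1 ω = 1} = {ω | D1 ω = 1 ∧ D0 ω = 0} ∪ {ω | D1 ω = 1 ∧ D0 ω = 1} := by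
    ext ω; rcases hD0_01 ω with h | h <;> simp [h]
  have hS0 : {ω | D0 ω = 1} = {ω | D1 ω = 0 ∧ D0 ω = 1} ∪ {ω | D1 ω = 1 ∧ D0 ω = 1} := by
    ext ω; rcases hD1_01 ω with h | h <;> simp [h]
  have hS1c : {ω | D1 ω = 1}ᶜ = {ω | D1 ω = 0 ∧ D0 ω = 0} ∪ {ω | D1 ω = 0 ∧ D0 ω = 1} := by
    ext ω; rcases hD0_01 ω with h | h <;> rcases hD1_01 ω with h' | h' <;> simp [h, h']
  have hmeas : ∀ a b : ℝ, MeasurableSet {ω | D1 ω = a ∧ D0 ω = b} := fun a b =>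
    (measurableSet_eq_fun hD1 measurable_const).inter (measurableSet_eq_fun hD0 measurable_const)
  have hdisj : ∀ {a b c d : ℝ}, (a ≠ c ∨ b ≠ d) →
      Disjoint {ω | D1 ω = a ∧ D0 ω = b} {ω | D1 ω = c ∧ D0 ω = d} := by
    rintro a b c d h
    refine Set.disjoint_left.mpr fun ω ⟨h₁, h₀⟩ ⟨h₁', h₀'⟩ => ?_
    rcases h with h | h
    exacts [h (h₁ ▸ h₁'), h (h₀ ▸ h₀')]
  have hp1_sum := hp1.comp_ae_eq
    (hS1 ▸ he10.union (hdisj (by norm_num)) (hmeas _ _) (hmeas _ _) he11)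
  have hp0_sum := hp0.comp_ae_eq
    (hS0 ▸ he01.union (hdisj (by norm_num)) (hmeas _ _) (hmeas _ _) he11)
  have hp1c_sum := (hp1.compl_s16 hX (measurableSet_eq_fun hD1 measurable_const)).comp_ae_eq
    (hS1c ▸ he00.union (hdisj (by norm_num)) (hmeas _ _) (hmeas _ _) he01)
  simp only [Filter.EventuallyEq, ← Filter.eventually_and]
  filter_upwards [hp1_sum, hp0_sum, hp1c_sum, hrel, hηr] with ω h₁ h₀ h₁c hodds hη
  exact principal_scores_of_odds hη.2 h₁ h₀ h₁c hodds

/-- **Sensitivity-analysis principal score formulas without monotonicity.** If the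
conditional odds of the harmed versus the benefited stratum is `η(X)` (with `η(X) ≥ 0`,
`η(X) ≠ 1` a.s.), i.e. `e_01(X) = η(X)·e_10(X)`, then almost surely
`e_10(X) = (p_1(X) − p_0(X))/(1 − η(X))`,
`e_01(X) = η(X)·(p_1(X) − p_0(X))/(1 − η(X))`,
`e_00(X) = 1 − p_0(X) − (p_1(X) − p_0(X))/(1 − η(X))`, and
`e_11(X) = p_1(X) − (p_1(X) − p_0(X))/(1 − η(X))`. -/
theorem sensitivity_principal_scores [StandardBorelSpace 𝒳]
    (P : Measure Ω) [IsProbabilityMeasure P]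
    (X : Ω → 𝒳) (D0 D1 : Ω → ℝ)
    (hX : Measurable X) (hD0 : Measurable D0) (hD1 : Measurable D1)
    (hD0_01 : ∀ ω, D0 ω = 0 ∨ D0 ω = 1) (hD1_01 : ∀ ω, D1 ω = 0 ∨ D1 ω = 1)
    -- p_z is a σ(X)-measurable version of P(D(z)=1 | σ(X)), for z ∈ {0,1}
    (p0f p1f : 𝒳 → ℝ)
    (hp0 : IsCondProb P X {ω | D0 ω = 1} p0f) (hp1 : IsCondProb P X {ω | D1 ω = 1} p1f)
    -- e_s is a σ(X)-measurable version of P(S = s | σ(X)), for each stratum s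
    (e10f e01f e00f e11f : 𝒳 → ℝ)
    (he10 : IsCondProb P X {ω | D1 ω = 1 ∧ D0 ω = 0} e10f)
    (he01 : IsCondProb P X {ω | D1 ω = 0 ∧ D0 ω = 1} e01f)
    (he00 : IsCondProb P X {ω | D1 ω = 0 ∧ D0 ω = 0} e00f)
    (he11 : IsCondProb P X {ω | D1 ω = 1 ∧ D0 ω = 1} e11f)
    -- the σ(X)-measurable sensitivity function η, with η(X) ≥ 0 and η(X) ≠ 1 a.s.
    (η : 𝒳 → ℝ) (hη : Measurable η)
    (hηr : ∀ᵐ ω ∂P, 0 ≤ η (X ω) ∧ η (X ω) ≠ 1)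
    -- e_01(X) = η(X)·e_10(X) almost surely
    (hrel : (fun ω => e01f (X ω)) =ᵐ[P] fun ω => η (X ω) * e10f (X ω)) :
    ((fun ω => e10f (X ω)) =ᵐ[P]
        fun ω => (p1f (X ω) - p0f (X ω)) / (1 - η (X ω))) ∧
    ((fun ω => e01f (X ω)) =ᵐ[P]
        fun ω => η (X ω) * (p1f (X ω) - p0f (X ω)) / (1 - η (X ω))) ∧
    ((fun ω => e00f (X ω)) =ᵐ[P]
        fun ω => 1 - p0f (X ω) - (p1f (X ω) - p0f (X ω)) / (1 - η (X ω))) ∧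
    ((fun ω => e11f (X ω)) =ᵐ[P]
        fun ω => p1f (X ω) - (p1f (X ω) - p0f (X ω)) / (1 - η (X ω))) :=
  sensitivity_principal_scores_general P X D0 D1 hX hD0 hD1 hD0_01 hD1_01 p0f p1f hp0 hp1 e10f e01f
    e00f e11f he10 he01 he00 he11 η hηr hrel

end
end
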